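/- arXiv:1210.6296 — 8 statements merged into one kernel-verified Lean document; each statement's English description precedes it below -/
import Mathlib

section
/- Let 𝔫 be a finite-dimensional k-step nilpotent real Lie algebra with k ≥ 2 such that every closed 2-form ω on 𝔫 satisfies ω(x,y) = 0 for all x ∈ 𝔫^{k-1} and y ∈ 𝔫 (i.e. E_∞^{0,2}(𝔫) = 0). Then for every s ≥ 0 the product Lie algebra ℝ^s × 𝔫 (with ℝ^s abelian and componentwise bracket) admits no symplectic structure. -/
attribute [local instance 100] LieRing.ofAssociativeRing

/-- Componentwise Lie ring structure on a product. -/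
instance prodLieRing {L M : Type*} [LieRing L] [LieRing M] : LieRing (L × M) where
  bracket p q := (⁅p.1, q.1⁆, ⁅p.2, q.2⁆)
  add_lie p q r := by ext <;> simp [add_lie]
  lie_add p q r := by ext <;> simp [lie_add]
  lie_self p := by ext <;> simp
  leibniz_lie p q r := by
    ext
    · exact leibniz_lie p.1 q.1 r.1
    · exact leibniz_lie p.2 q.2 r.2

instance prodLieAlgebra {R : Type*} [CommRing R] {L M : Type*} [LieRing L] [LieRing M]
    [LieAlgebra R L] [LieAlgebra R M] : LieAlgebra R (L × M) where
  lie_smul t p q := by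
    ext
    · exact lie_smul t p.1 q.1
    · exact lie_smul t p.2 q.2

/-- A 2-form (alternating bilinear map) is closed if it satisfies the cocycle condition. -/
def IsClosed2Form {L : Type*} [LieRing L] [LieAlgebra ℝ L] (ω : L →ₗ[ℝ] L →ₗ[ℝ] ℝ) : Prop :=
  ∀ x y z : L, ω ⁅x, y⁆ z + ω ⁅y, z⁆ x + ω ⁅z, x⁆ y = 0

/-- A symplectic structure: an alternating, closed, nondegenerate bilinear form. -/
def IsSymplecticForm {L : Type*} [LieRing L] [LieAlgebra ℝ L] (ω : L →ₗ[ℝ] L →ₗ[ℝ] ℝ) : Prop :=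
  (∀ x : L, ω x x = 0) ∧ IsClosed2Form ω ∧ ∀ x : L, x ≠ 0 → ∃ y : L, ω x y ≠ 0

/-!
For a closed 2-form `ω` on `A × 𝔫`, the cocycle identity on `(0, u), (0, v), (a, 0)` reads
`ω((0, [u, v]), (a, 0)) = 0`, because the other two brackets vanish in the product; so `(0, x)`
is `ω`-orthogonal to `A` for every `x ∈ [𝔫, 𝔫]`. The restriction of `ω` to `𝔫` is closed, so
`E_∞^{0,2}(𝔫) = 0` makes `(0, x)` orthogonal to `𝔫` as well when `x ∈ 𝔫^{k-1} ⊆ [𝔫, 𝔫]`.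
A nonzero such `x` therefore lies in the radical of `ω`.
-/

theorem lowerCentralSeries_one_le_ker {R L M : Type*} [CommRing R] [LieRing L] [LieAlgebra R L]
    [AddCommGroup M] [Module R M] (f : L →ₗ[R] M) (hf : ∀ u v : L, f ⁅u, v⁆ = 0) :
    (LieModule.lowerCentralSeries R L L 1).toSubmodule ≤ LinearMap.ker f := by
  rw [LieModule.lowerCentralSeries_succ, LieModule.lowerCentralSeries_zero,
    LieSubmodule.lieIdeal_oper_eq_linear_span', Submodule.span_le]
  rintro _ ⟨u, -, v, -, rfl⟩
  exact hf u v

section Product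

theorem prod_lie_def {A L : Type*} [LieRing A] [LieRing L] (p q : A × L) :
    ⁅p, q⁆ = (⁅p.1, q.1⁆, ⁅p.2, q.2⁆) := rfl

variable {A L : Type*} [LieRing A] [LieAlgebra ℝ A] [LieRing L] [LieAlgebra ℝ L]

def restrictSnd (ω : (A × L) →ₗ[ℝ] (A × L) →ₗ[ℝ] ℝ) : L →ₗ[ℝ] L →ₗ[ℝ] ℝ :=
  (ω.comp (LinearMap.inr ℝ A L)).compl₂ (LinearMap.inr ℝ A L)

@[simp]
theorem restrictSnd_apply (ω : (A × L) →ₗ[ℝ] (A × L) →ₗ[ℝ] ℝ) (x y : L) :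
    restrictSnd ω x y = ω (0, x) (0, y) := rfl

variable {ω : (A × L) →ₗ[ℝ] (A × L) →ₗ[ℝ] ℝ}

theorem isClosed2Form_restrictSnd (hω : IsClosed2Form ω) : IsClosed2Form (restrictSnd ω) := by
  intro x y z
  simpa [prod_lie_def] using hω (0, x) (0, y) (0, z)

theorem IsClosed2Form.apply_inr_lie_inl (hω : IsClosed2Form ω) (u v : L) (a : A) :
    ω (0, ⁅u, v⁆) (a, 0) = 0 := by
  simpa [prod_lie_def, Prod.mk_zero_zero] using hω (0, u) (0, v) (a, 0)

theorem IsClosed2Form.apply_inr_inl_of_mem (hω : IsClosed2Form ω) {x : L}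
    (hx : x ∈ LieModule.lowerCentralSeries ℝ L L 1) (a : A) : ω (0, x) (a, 0) = 0 :=
  lowerCentralSeries_one_le_ker ((ω.flip (a, 0)).comp (LinearMap.inr ℝ A L))
    (fun u v => hω.apply_inr_lie_inl u v a) hx

theorem IsClosed2Form.apply_inr_eq_zero (hω : IsClosed2Form ω) {x : L}
    (hx : x ∈ LieModule.lowerCentralSeries ℝ L L 1) (hxL : ∀ y : L, restrictSnd ω x y = 0)
    (q : A × L) : ω (0, x) q = 0 := by
  have hq : q = (q.1, 0) + (0, q.2) := by simp
  rw [hq, map_add, hω.apply_inr_inl_of_mem hx, ← restrictSnd_apply, hxL, add_zero]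

end Product

theorem no_symplectic_of_E02_eq_zero_general {L : Type*} [LieRing L] [LieAlgebra ℝ L]
    (k : ℕ) (hk2 : 2 ≤ k)
    (hk1 : LieModule.lowerCentralSeries ℝ L L (k - 1) ≠ ⊥)
    (hE : ∀ ω : L →ₗ[ℝ] L →ₗ[ℝ] ℝ, (∀ x : L, ω x x = 0) → IsClosed2Form ω →
      ∀ x ∈ LieModule.lowerCentralSeries ℝ L L (k - 1), ∀ y : L, ω x y = 0) :
    ∀ s : ℕ, ¬ ∃ ω : ((Fin s → ℝ) × L) →ₗ[ℝ] ((Fin s → ℝ) × L) →ₗ[ℝ] ℝ,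
      IsSymplecticForm ω := by
  rintro s ⟨ω, halt, hclosed, hnd⟩
  obtain ⟨x, hx, hx0⟩ :=
    (Submodule.ne_bot_iff _).mp ((LieSubmodule.toSubmodule_eq_bot _).not.mpr hk1)
  have hx1 : x ∈ LieModule.lowerCentralSeries ℝ L L 1 :=
    LieModule.antitone_lowerCentralSeries ℝ L L (show 1 ≤ k - 1 by omega) hx
  obtain ⟨q, hq⟩ := hnd (0, x) (by simpa using hx0)
  have hxL := hE (restrictSnd ω) (fun y => halt _) (isClosed2Form_restrictSnd hclosed) x hx
  exact hq (hclosed.apply_inr_eq_zero hx1 hxL q)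

/-- If `𝔫` is `k`-step nilpotent (`k ≥ 2`) with `E_∞^{0,2}(𝔫) = 0`, then no trivial extension
`ℝ^s × 𝔫` admits a symplectic structure. -/
theorem no_symplectic_of_E02_eq_zero {L : Type*} [LieRing L] [LieAlgebra ℝ L]
    [FiniteDimensional ℝ L] (k : ℕ) (hk2 : 2 ≤ k)
    (hk : LieModule.lowerCentralSeries ℝ L L k = ⊥)
    (hk1 : LieModule.lowerCentralSeries ℝ L L (k - 1) ≠ ⊥)
    (hE : ∀ ω : L →ₗ[ℝ] L →ₗ[ℝ] ℝ, (∀ x : L, ω x x = 0) → IsClosed2Form ω →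
      ∀ x ∈ LieModule.lowerCentralSeries ℝ L L (k - 1), ∀ y : L, ω x y = 0) :
    ∀ s : ℕ, ¬ ∃ ω : ((Fin s → ℝ) × L) →ₗ[ℝ] ((Fin s → ℝ) × L) →ₗ[ℝ] ℝ,
      IsSymplecticForm ω :=
  no_symplectic_of_E02_eq_zero_general k hk2 hk1 hE
end

section
/- Let 𝔫 be a non-abelian finite-dimensional k-step nilpotent real Lie algebra and let s ≥ 0. Then every closed 2-form on 𝔫 vanishes whenever its first argument lies in 𝔫^{k-1} if and only if every closed 2-form ω̃ on the product Lie algebra ℝ^s × 𝔫 (with ℝ^s abelian) satisfies ω̃((0,x), v) = 0 for all x ∈ 𝔫^{k-1} and all v ∈ ℝ^s × 𝔫. (Note that {0} × 𝔫^{k-1} is the (k-1)st term of the lower central series of ℝ^s × 𝔫, so this says E_∞^{0,2}(ℝ^s ⊕ 𝔫) = 0 if and only if E_∞^{0,2}(𝔫) = 0.) -/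
attribute [local instance 100] LieRing.ofAssociativeRing

/-! Pulling a closed form back along the projection `A × 𝔫 → 𝔫` gives one direction. For the
other, split `v = (a, 0) + (0, y)`. The second summand is handled by restricting `ω'` along
`y ↦ (0, y)`. For the first, `(a, 0)` commutes with `0 × 𝔫`, so the cocycle identity gives
`ω'((0, ⁅u, w⁆), (a, 0)) = 0`: the functional `ω'((0, ·), (a, 0))` vanishes on `𝔫^1`, which contains
`𝔫^{k-1}` because a non-abelian nilpotent `𝔫` has `k ≥ 2`. -/

namespace LieModule

variable {R L M : Type*} [CommRing R] [LieRing L] [LieAlgebra R L]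
  [AddCommGroup M] [Module R M] [LieRingModule L M]

lemma two_le_of_lowerCentralSeries_eq_bot (hM : ∃ (x : L) (m : M), ⁅x, m⁆ ≠ 0) {k : ℕ}
    (hk : lowerCentralSeries R L M k = ⊥) : 2 ≤ k := by
  by_contra! hk2
  obtain ⟨x, m, hxm⟩ := hM
  have hbot : lowerCentralSeries R L M 1 = ⊥ :=
    eq_bot_iff.mpr (hk ▸ antitone_lowerCentralSeries R L M (by omega))
  exact hxm (((trivial_iff_lower_central_eq_bot R L M).mpr hbot).trivial x m)

lemma lowerCentralSeries_one_le_ker [LieModule R L M] {N : Type*} [AddCommGroup N] [Module R N]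
    (f : M →ₗ[R] N) (hf : ∀ (x : L) (m : M), f ⁅x, m⁆ = 0) :
    (lowerCentralSeries R L M 1 : Submodule R M) ≤ LinearMap.ker f := by
  rw [lowerCentralSeries_succ, lowerCentralSeries_zero,
    LieSubmodule.lieIdeal_oper_eq_linear_span', Submodule.span_le]
  rintro _ ⟨x, -, m, -, rfl⟩
  exact hf x m

end LieModule

namespace IsClosed2Form

variable {L M : Type*} [LieRing L] [LieAlgebra ℝ L] [LieRing M] [LieAlgebra ℝ M]

lemma compl₁₂_lieHom {ω : M →ₗ[ℝ] M →ₗ[ℝ] ℝ} (hω : IsClosed2Form ω) (f : L →ₗ⁅ℝ⁆ M) :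
    IsClosed2Form (ω.compl₁₂ (f : L →ₗ[ℝ] M) f) := by
  intro x y z
  simpa using hω (f x) (f y) (f z)

lemma apply_lie_eq_zero {ω : L →ₗ[ℝ] L →ₗ[ℝ] ℝ} (hω : IsClosed2Form ω) {x y z : L}
    (hyz : ⁅y, z⁆ = 0) (hzx : ⁅z, x⁆ = 0) : ω ⁅x, y⁆ z = 0 := by
  simpa [hyz, hzx] using hω x y z

end IsClosed2Form

section Product

variable {A L : Type*} [LieRing A] [LieAlgebra ℝ A] [LieRing L] [LieAlgebra ℝ L]

lemma IsClosed2Form.apply_inr_inl_eq_zero {ω : (A × L) →ₗ[ℝ] (A × L) →ₗ[ℝ] ℝ}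
    (hω : IsClosed2Form ω) (a : A) {x : L} (hx : x ∈ LieModule.lowerCentralSeries ℝ L L 1) :
    ω (0, x) (a, 0) = 0 := by
  have hf : ∀ u w : L, (ω.comp (LinearMap.inr ℝ A L)).flip (a, 0) ⁅u, w⁆ = 0 := fun u w => by
    simpa using hω.apply_lie_eq_zero (x := ((0 : A), u)) (y := ((0 : A), w)) (z := (a, (0 : L)))
      (by ext <;> simp) (by ext <;> simp)
  exact LieModule.lowerCentralSeries_one_le_ker _ hf hx

lemma forall_closed_apply_eq_zero_iff_prod {n : ℕ} (hn : 1 ≤ n) :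
    (∀ ω : L →ₗ[ℝ] L →ₗ[ℝ] ℝ, (∀ x : L, ω x x = 0) → IsClosed2Form ω →
        ∀ x ∈ LieModule.lowerCentralSeries ℝ L L n, ∀ y : L, ω x y = 0) ↔
    (∀ ω' : (A × L) →ₗ[ℝ] (A × L) →ₗ[ℝ] ℝ, (∀ v : A × L, ω' v v = 0) → IsClosed2Form ω' →
        ∀ x ∈ LieModule.lowerCentralSeries ℝ L L n, ∀ v : A × L, ω' (0, x) v = 0) := by
  constructor
  · intro H ω' halt hω' x hx v
    have hx1 : x ∈ LieModule.lowerCentralSeries ℝ L L 1 :=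
      LieModule.antitone_lowerCentralSeries ℝ L L hn hx
    have hL := H (ω'.compl₁₂ (LieHom.inr ℝ A L : L →ₗ[ℝ] A × L) (LieHom.inr ℝ A L))
      (fun y => halt _) (hω'.compl₁₂_lieHom _) x hx v.2
    calc ω' (0, x) v = ω' (0, x) (v.1, 0) + ω' (0, x) (0, v.2) := by rw [← map_add]; simp
      _ = 0 := by rw [hω'.apply_inr_inl_eq_zero v.1 hx1]; simpa [LieHom.inr_apply] using hL
  · intro H ω halt hω x hx y
    simpa using H (ω.compl₁₂ (LieHom.snd ℝ A L : A × L →ₗ[ℝ] L) (LieHom.snd ℝ A L))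
      (fun v => halt v.2) (hω.compl₁₂_lieHom _) x hx (0, y)

end Product

theorem E02_eq_zero_iff_E02_prod_eq_zero_general {L : Type*} [LieRing L] [LieAlgebra ℝ L]
    (hna : ∃ x y : L, ⁅x, y⁆ ≠ 0) (k : ℕ)
    (hk : LieModule.lowerCentralSeries ℝ L L k = ⊥) (s : ℕ) :
    (∀ ω : L →ₗ[ℝ] L →ₗ[ℝ] ℝ, (∀ x : L, ω x x = 0) → IsClosed2Form ω →
        ∀ x ∈ LieModule.lowerCentralSeries ℝ L L (k - 1), ∀ y : L, ω x y = 0) ↔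
    (∀ ω' : ((Fin s → ℝ) × L) →ₗ[ℝ] ((Fin s → ℝ) × L) →ₗ[ℝ] ℝ,
        (∀ v : (Fin s → ℝ) × L, ω' v v = 0) → IsClosed2Form ω' →
        ∀ x ∈ LieModule.lowerCentralSeries ℝ L L (k - 1), ∀ v : (Fin s → ℝ) × L,
          ω' ((0 : Fin s → ℝ), x) v = 0) := by
  have hk2 := LieModule.two_le_of_lowerCentralSeries_eq_bot hna hk
  exact forall_closed_apply_eq_zero_iff_prod (by omega)

/-- For a non-abelian `k`-step nilpotent `𝔫`: `E_∞^{0,2}(𝔫) = 0` iff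
`E_∞^{0,2}(ℝ^s ⊕ 𝔫) = 0`. -/
theorem E02_eq_zero_iff_E02_prod_eq_zero {L : Type*} [LieRing L] [LieAlgebra ℝ L]
    [FiniteDimensional ℝ L] (hna : ∃ x y : L, ⁅x, y⁆ ≠ 0) (k : ℕ)
    (hk : LieModule.lowerCentralSeries ℝ L L k = ⊥)
    (hk1 : LieModule.lowerCentralSeries ℝ L L (k - 1) ≠ ⊥) (s : ℕ) :
    (∀ ω : L →ₗ[ℝ] L →ₗ[ℝ] ℝ, (∀ x : L, ω x x = 0) → IsClosed2Form ω →
        ∀ x ∈ LieModule.lowerCentralSeries ℝ L L (k - 1), ∀ y : L, ω x y = 0) ↔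
    (∀ ω' : ((Fin s → ℝ) × L) →ₗ[ℝ] ((Fin s → ℝ) × L) →ₗ[ℝ] ℝ,
        (∀ v : (Fin s → ℝ) × L, ω' v v = 0) → IsClosed2Form ω' →
        ∀ x ∈ LieModule.lowerCentralSeries ℝ L L (k - 1), ∀ v : (Fin s → ℝ) × L,
          ω' ((0 : Fin s → ℝ), x) v = 0) :=
  E02_eq_zero_iff_E02_prod_eq_zero_general hna k hk s
end

section
/- Let 𝔫 be a nonzero finite-dimensional k-step nilpotent real Lie algebra and let ω be a symplectic structure on 𝔫. On 𝔫̃ = 𝔫 × ℝ define the bracket [(x,a),(y,b)] = ([x,y], ω(x,y)). Then: (1) this bracket makes 𝔫̃ a real Lie algebra (the Jacobi identity holds because ω is closed); (2) the lower central series of 𝔫̃ satisfies 𝔫̃^i = 𝔫^i × ℝ for 1 ≤ i ≤ k, so in particular 𝔫̃^k = {0} × ℝ and 𝔫̃^{k+1} = 0, i.e. 𝔫̃ is (k+1)-step nilpotent; and (3) the center of 𝔫̃ equals {0} × ℝ. -/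
/-- The bracket of the central extension `𝔫̃ = 𝔫 × ℝ` of `𝔫` by the cocycle `ω`. -/
def extBracket {L : Type*} [LieRing L] [LieAlgebra ℝ L] (ω : L →ₗ[ℝ] L →ₗ[ℝ] ℝ)
    (p q : L × ℝ) : L × ℝ :=
  (⁅p.1, q.1⁆, ω p.1 q.1)

/-- The lower central series of the central extension, defined directly from its bracket. -/
def extLCS {L : Type*} [LieRing L] [LieAlgebra ℝ L] (ω : L →ₗ[ℝ] L →ₗ[ℝ] ℝ) :
    ℕ → Submodule ℝ (L × ℝ)
  | 0 => ⊤
  | (i + 1) => Submodule.span ℝ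
      {z : L × ℝ | ∃ p q : L × ℝ, q ∈ extLCS ω i ∧ z = extBracket ω p q}

/-!
The `ℝ`-component of the Jacobi identity in `𝔫̃` is exactly the closedness of `ω`. For the lower
central series, projecting to `𝔫` gives `𝔫̃^i ≤ 𝔫^i × ℝ`. Conversely, a nonzero `z ∈ 𝔫^(k-1)` is
central because `𝔫^k = 0`, and nondegeneracy gives `y` with `ω(y, z) ≠ 0`; since `(z, 0) ∈ 𝔫̃^i`
for `i < k`, the bracket `[(y, 0), (z, 0)] = (0, ω(y, z))` puts `{0} × ℝ` into `𝔫̃^(i+1)`. Modulo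
`{0} × ℝ` the brackets of `𝔫̃` are those of `𝔫`, whence `𝔫^(i+1) × ℝ ≤ 𝔫̃^(i+1)`. Finally
`𝔫̃^k = {0} × ℝ` is central, so `𝔫̃^(k+1) = 0`.
-/

open LieModule

theorem LieModule.exists_ne_zero_forall_lie_eq_zero_of_lowerCentralSeries
    {R L M : Type*} [CommRing R] [LieRing L] [LieAlgebra R L] [AddCommGroup M] [Module R M]
    [LieRingModule L M] [LieModule R L M] {k : ℕ}
    (hk : lowerCentralSeries R L M k = ⊥) (hk1 : lowerCentralSeries R L M (k - 1) ≠ ⊥) :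
    ∃ m ∈ lowerCentralSeries R L M (k - 1), m ≠ 0 ∧ ∀ x : L, ⁅x, m⁆ = 0 := by
  have hk0 : k ≠ 0 := by
    rintro rfl
    exact hk1 hk
  obtain ⟨m, hm, hm0⟩ :=
    Submodule.exists_mem_ne_zero_of_ne_bot (mt (LieSubmodule.toSubmodule_eq_bot _).mp hk1)
  refine ⟨m, hm, hm0, fun x => ?_⟩
  have hxm : ⁅x, m⁆ ∈ ⁅(⊤ : LieIdeal R L), lowerCentralSeries R L M (k - 1)⁆ :=
    LieSubmodule.lie_mem_lie (LieSubmodule.mem_top x) hm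
  rwa [← LieModule.lowerCentralSeries_succ, Nat.sub_add_cancel (Nat.one_le_iff_ne_zero.mpr hk0), hk,
    LieSubmodule.mem_bot] at hxm

section CentralExtension

variable {L : Type*} [LieRing L] [LieAlgebra ℝ L] (ω : L →ₗ[ℝ] L →ₗ[ℝ] ℝ)

theorem extBracket_add_left (p q r : L × ℝ) :
    extBracket ω (p + q) r = extBracket ω p r + extBracket ω q r := by
  simp [extBracket, add_lie]

theorem extBracket_add_right (p q r : L × ℝ) :
    extBracket ω p (q + r) = extBracket ω p q + extBracket ω p r := by
  simp [extBracket, lie_add]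

theorem extBracket_smul_left (t : ℝ) (p q : L × ℝ) :
    extBracket ω (t • p) q = t • extBracket ω p q := by
  simp [extBracket, smul_lie]

theorem extBracket_smul_right (t : ℝ) (p q : L × ℝ) :
    extBracket ω p (t • q) = t • extBracket ω p q := by
  simp [extBracket, lie_smul]

variable {ω}

theorem extBracket_self (hω : ω.IsAlt) (p : L × ℝ) : extBracket ω p p = 0 := by
  simp [extBracket, hω.self_eq_zero]

theorem extBracket_leibniz (halt : ω.IsAlt) (hclosed : IsClosed2Form ω) (p q r : L × ℝ) :
    extBracket ω p (extBracket ω q r) =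
      extBracket ω (extBracket ω p q) r + extBracket ω q (extBracket ω p r) := by
  refine Prod.ext (leibniz_lie p.1 q.1 r.1) ?_
  have hcocycle := hclosed p.1 q.1 r.1
  rw [← halt.neg p.1, ← halt.neg q.1, ← lie_skew r.1 p.1, map_neg] at hcocycle
  simp only [extBracket, Prod.snd_add]
  linarith

theorem forall_extBracket_eq_zero_iff (hnd : ∀ x : L, x ≠ 0 → ∃ y : L, ω x y ≠ 0) (p : L × ℝ) :
    (∀ q : L × ℝ, extBracket ω p q = 0) ↔ p.1 = 0 := by
  refine ⟨fun hp => by_contra fun hp0 => ?_, fun hp q => by simp [extBracket, hp]⟩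
  obtain ⟨y, hy⟩ := hnd p.1 hp0
  exact hy (congrArg Prod.snd (hp (y, 0)))

theorem extBracket_mem_extLCS_succ (p : L × ℝ) {q : L × ℝ} {i : ℕ} (hq : q ∈ extLCS ω i) :
    extBracket ω p q ∈ extLCS ω (i + 1) :=
  Submodule.subset_span ⟨p, q, hq, rfl⟩

theorem extLCS_le_prod_lowerCentralSeries (i : ℕ) :
    extLCS ω i ≤ (lowerCentralSeries ℝ L L i : Submodule ℝ L).prod ⊤ := by
  induction i with
  | zero => exact fun _ _ => ⟨trivial, trivial⟩
  | succ i ih =>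
    rw [extLCS, Submodule.span_le]
    rintro _ ⟨p, q, hq, rfl⟩
    have hbracket := LieSubmodule.lie_mem_lie (LieSubmodule.mem_top p.1) (ih hq).1
    rw [← LieModule.lowerCentralSeries_succ] at hbracket
    exact ⟨hbracket, trivial⟩

theorem mk_zero_mem_extLCS_succ {i : ℕ} {y z : L} (hz : (z, (0 : ℝ)) ∈ extLCS ω i)
    (hz_central : ∀ x : L, ⁅x, z⁆ = 0) (hyz : ω y z ≠ 0) (r : ℝ) :
    ((0 : L), r) ∈ extLCS ω (i + 1) := by
  have hbracket : extBracket ω (y, 0) (z, 0) = ((0 : L), ω y z) := by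
    simp [extBracket, hz_central y]
  have hmem := (extLCS ω (i + 1)).smul_mem (r / ω y z) (extBracket_mem_extLCS_succ (y, 0) hz)
  rwa [hbracket, Prod.smul_mk, smul_zero, smul_eq_mul, div_mul_cancel₀ r hyz] at hmem

theorem prod_lowerCentralSeries_le_extLCS_succ {i : ℕ}
    (hi : (lowerCentralSeries ℝ L L i : Submodule ℝ L).prod ⊤ ≤ extLCS ω i)
    (hcentre : ∀ r : ℝ, ((0 : L), r) ∈ extLCS ω (i + 1)) :
    (lowerCentralSeries ℝ L L (i + 1) : Submodule ℝ L).prod ⊤ ≤ extLCS ω (i + 1) := by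
  refine (Submodule.prod_le_iff ..).mpr ⟨Submodule.map_le_iff_le_comap.mpr ?_, ?_⟩
  · intro x hx
    rw [LieModule.lowerCentralSeries_succ] at hx
    replace hx : x ∈ (⁅(⊤ : LieIdeal ℝ L), lowerCentralSeries ℝ L L i⁆).toSubmodule := hx
    rw [LieSubmodule.lieIdeal_oper_eq_linear_span'] at hx
    refine Submodule.span_le.mpr ?_ hx
    rintro _ ⟨a, -, n, hn, rfl⟩
    have hdecomp : (⁅a, n⁆, (0 : ℝ)) = extBracket ω (a, 0) (n, 0) - ((0 : L), ω a n) := by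
      simp [extBracket]
    show (⁅a, n⁆, (0 : ℝ)) ∈ extLCS ω (i + 1)
    rw [hdecomp]
    exact sub_mem (extBracket_mem_extLCS_succ _ (hi ⟨hn, trivial⟩)) (hcentre _)
  · rintro _ ⟨r, -, rfl⟩
    exact hcentre r

theorem extLCS_eq_prod_lowerCentralSeries {k : ℕ} {y z : L}
    (hz : z ∈ lowerCentralSeries ℝ L L (k - 1)) (hz_central : ∀ x : L, ⁅x, z⁆ = 0)
    (hyz : ω y z ≠ 0) :
    ∀ i ≤ k, extLCS ω i = (lowerCentralSeries ℝ L L i : Submodule ℝ L).prod ⊤ := by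
  intro i
  induction i with
  | zero => exact fun _ => (Submodule.prod_top).symm
  | succ i ih =>
    intro hik
    have hi := ih (Nat.le_of_succ_le hik)
    have hzi : (z, (0 : ℝ)) ∈ extLCS ω i :=
      hi ▸ ⟨antitone_lowerCentralSeries ℝ L L (Nat.le_sub_one_of_lt hik) hz, trivial⟩
    exact le_antisymm (extLCS_le_prod_lowerCentralSeries i.succ)
      (prod_lowerCentralSeries_le_extLCS_succ hi.ge (mk_zero_mem_extLCS_succ hzi hz_central hyz))

theorem extLCS_succ_eq_bot {k : ℕ} (hk : extLCS ω k = (⊥ : Submodule ℝ L).prod ⊤) :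
    extLCS ω (k + 1) = ⊥ := by
  rw [extLCS, Submodule.span_eq_bot]
  rintro _ ⟨p, q, hq, rfl⟩
  rw [hk] at hq
  have hq1 : q.1 = 0 := hq.1
  simp [extBracket, hq1]

end CentralExtension

theorem central_extension_structure_general {L : Type*} [LieRing L] [LieAlgebra ℝ L]
    (k : ℕ)
    (hk : LieModule.lowerCentralSeries ℝ L L k = ⊥)
    (hk1 : LieModule.lowerCentralSeries ℝ L L (k - 1) ≠ ⊥)
    (ω : L →ₗ[ℝ] L →ₗ[ℝ] ℝ) (hω : IsSymplecticForm ω) :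
    -- (1) the bracket makes 𝔫̃ = 𝔫 × ℝ a real Lie algebra
    ((∀ p q r : L × ℝ, extBracket ω (p + q) r = extBracket ω p r + extBracket ω q r) ∧
     (∀ p q r : L × ℝ, extBracket ω p (q + r) = extBracket ω p q + extBracket ω p r) ∧
     (∀ (t : ℝ) (p q : L × ℝ), extBracket ω (t • p) q = t • extBracket ω p q) ∧
     (∀ (t : ℝ) (p q : L × ℝ), extBracket ω p (t • q) = t • extBracket ω p q) ∧
     (∀ p : L × ℝ, extBracket ω p p = 0) ∧
     (∀ p q r : L × ℝ, extBracket ω p (extBracket ω q r) =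
        extBracket ω (extBracket ω p q) r + extBracket ω q (extBracket ω p r))) ∧
    -- (2) the lower central series of 𝔫̃ is 𝔫^i × ℝ for 1 ≤ i ≤ k, and 𝔫̃ is
    -- (k+1)-step nilpotent
    ((∀ i : ℕ, 1 ≤ i → i ≤ k → extLCS ω i =
        (LieModule.lowerCentralSeries ℝ L L i : Submodule ℝ L).prod ⊤) ∧
     extLCS ω k = (⊥ : Submodule ℝ L).prod ⊤ ∧
     extLCS ω (k + 1) = ⊥) ∧
    -- (3) the center of 𝔫̃ is {0} × ℝ
    ({p : L × ℝ | ∀ q : L × ℝ, extBracket ω p q = 0} = {p : L × ℝ | p.1 = 0}) := by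
  obtain ⟨halt, hclosed, hnd⟩ := hω
  obtain ⟨z, hz, hz0, hz_central⟩ := exists_ne_zero_forall_lie_eq_zero_of_lowerCentralSeries hk hk1
  obtain ⟨y, hzy⟩ := hnd z hz0
  have hyz : ω y z ≠ 0 := by rwa [← LinearMap.IsAlt.neg halt, neg_ne_zero]
  have hLCS := extLCS_eq_prod_lowerCentralSeries hz hz_central hyz
  have hLCS_k : extLCS ω k = (⊥ : Submodule ℝ L).prod ⊤ := by
    rw [hLCS k le_rfl, hk]
    rfl
  exact ⟨⟨extBracket_add_left ω, extBracket_add_right ω, extBracket_smul_left ω,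
      extBracket_smul_right ω, extBracket_self halt, extBracket_leibniz halt hclosed⟩,
    ⟨fun i _ hik => hLCS i hik, hLCS_k, extLCS_succ_eq_bot hLCS_k⟩,
    Set.ext (forall_extBracket_eq_zero_iff hnd)⟩

/-- The central extension of a `k`-step nilpotent symplectic Lie algebra by its symplectic form
is a `(k+1)`-step nilpotent Lie algebra whose lower central series terms are `𝔫^i × ℝ`
(`1 ≤ i ≤ k`) and whose center is `{0} × ℝ`. -/
theorem central_extension_structure {L : Type*} [LieRing L] [LieAlgebra ℝ L]
    [FiniteDimensional ℝ L] [Nontrivial L] (k : ℕ)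
    (hk : LieModule.lowerCentralSeries ℝ L L k = ⊥)
    (hk1 : LieModule.lowerCentralSeries ℝ L L (k - 1) ≠ ⊥)
    (ω : L →ₗ[ℝ] L →ₗ[ℝ] ℝ) (hω : IsSymplecticForm ω) :
    -- (1) the bracket makes 𝔫̃ = 𝔫 × ℝ a real Lie algebra
    ((∀ p q r : L × ℝ, extBracket ω (p + q) r = extBracket ω p r + extBracket ω q r) ∧
     (∀ p q r : L × ℝ, extBracket ω p (q + r) = extBracket ω p q + extBracket ω p r) ∧
     (∀ (t : ℝ) (p q : L × ℝ), extBracket ω (t • p) q = t • extBracket ω p q) ∧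
     (∀ (t : ℝ) (p q : L × ℝ), extBracket ω p (t • q) = t • extBracket ω p q) ∧
     (∀ p : L × ℝ, extBracket ω p p = 0) ∧
     (∀ p q r : L × ℝ, extBracket ω p (extBracket ω q r) =
        extBracket ω (extBracket ω p q) r + extBracket ω q (extBracket ω p r))) ∧
    -- (2) the lower central series of 𝔫̃ is 𝔫^i × ℝ for 1 ≤ i ≤ k, and 𝔫̃ is
    -- (k+1)-step nilpotent
    ((∀ i : ℕ, 1 ≤ i → i ≤ k → extLCS ω i =
        (LieModule.lowerCentralSeries ℝ L L i : Submodule ℝ L).prod ⊤) ∧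
     extLCS ω k = (⊥ : Submodule ℝ L).prod ⊤ ∧
     extLCS ω (k + 1) = ⊥) ∧
    -- (3) the center of 𝔫̃ is {0} × ℝ
    ({p : L × ℝ | ∀ q : L × ℝ, extBracket ω p q = 0} = {p : L × ℝ | p.1 = 0}) :=
  central_extension_structure_general k hk hk1 ω hω
end

section
/- Let n ≥ 3 and let 𝔱 be the real Lie algebra of strictly upper triangular (n+1)×(n+1) real matrices. Then for every s ≥ 0 the product Lie algebra ℝ^s × 𝔱 (with ℝ^s abelian) admits no symplectic structure. -/
set_option synthInstance.maxHeartbeats 1000000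

attribute [local instance 100] LieRing.ofAssociativeRing

lemma strict_mul_zero {n : ℕ} (A B : Matrix (Fin n) (Fin n) ℝ)
    (hA : ∀ i j : Fin n, j ≤ i → A i j = 0) (hB : ∀ i j : Fin n, j ≤ i → B i j = 0)
    {i j : Fin n} (h : j ≤ i) : (A * B) i j = 0 := by
  rw [Matrix.mul_apply]
  refine Finset.sum_eq_zero fun l _ => ?_
  by_cases hl : l ≤ i
  · rw [hA i l hl, zero_mul]
  · have : j ≤ l := le_trans h (le_of_not_ge hl)
    rw [hB l j this, mul_zero]

/-- The Lie algebra of strictly upper triangular `n × n` real matrices. -/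
def strictUpper (n : ℕ) : LieSubalgebra ℝ (Matrix (Fin n) (Fin n) ℝ) where
  carrier := {X | ∀ i j : Fin n, j ≤ i → X i j = 0}
  add_mem' := fun {X Y} hX hY i j h => by
    simp [Matrix.add_apply, hX i j h, hY i j h]
  zero_mem' := fun i j _ => rfl
  smul_mem' := fun t {X} hX i j h => by
    simp [Matrix.smul_apply, hX i j h]
  lie_mem' := fun {X Y} hX hY i j h => by
    rw [Ring.lie_def, Matrix.sub_apply, strict_mul_zero X Y hX hY h,
      strict_mul_zero Y X hY hX h, sub_zero]

/-!
The corner matrix `E₀ₙ` lies in the kernel of every closed 2-form `ω` on `ℝ^s × 𝔱`. Closedness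
gives `ω(⁅a, b⁆, d) = 0` whenever `d` commutes with `a` and `b`. Every vector of `ℝ^s` commutes
with `𝔱`, and for an elementary matrix `Eᵢⱼ` one picks `0 < k < n` outside `{i, j}` and writes
`E₀ₙ = ⁅E₀ₖ, Eₖₙ⁆`, both factors commuting with `Eᵢⱼ`. The single exception, `E₁₂` for `n = 3`,
follows from adding the cocycle identities for `(E₀₁, E₁ₙ, E₁₂)` and `(E₀₂, E₂ₙ, E₁₂)`.
So no closed 2-form is nondegenerate.
-/

namespace strictUpper

variable {m : ℕ}

def single (i j : Fin m) (h : i < j) : strictUpper m :=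
  ⟨Matrix.single i j 1, fun _ _ hqp => Matrix.single_apply_of_ne (h := by
    rintro ⟨rfl, rfl⟩
    exact hqp.not_gt h) ..⟩

@[simp]
lemma coe_single {i j : Fin m} (h : i < j) :
    (single i j h : Matrix (Fin m) (Fin m) ℝ) = Matrix.single i j 1 := rfl

lemma single_lie_single {i j l : Fin m} (hij : i < j) (hjl : j < l) :
    ⁅single i j hij, single j l hjl⁆ = single i l (hij.trans hjl) := by
  ext : 1
  simp [Ring.lie_def, (hij.trans hjl).ne']

lemma single_lie_single_of_ne {i j k l : Fin m} (hij : i < j) (hkl : k < l)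
    (hjk : j ≠ k) (hli : l ≠ i) : ⁅single i j hij, single k l hkl⁆ = 0 := by
  ext : 1
  simp [Ring.lie_def, hjk, hli]

lemma single_ne_zero {i j : Fin m} (h : i < j) : single i j h ≠ 0 := fun h0 => by
  simpa using congrArg (fun X : strictUpper m => (X : Matrix (Fin m) (Fin m) ℝ) i j) h0

lemma eq_sum_single (X : strictUpper m) :
    X = ∑ i, ∑ j, if h : i < j then (X : Matrix (Fin m) (Fin m) ℝ) i j • single i j h else 0 := by
  ext : 1
  conv_lhs => rw [Matrix.matrix_eq_sum_single (X : Matrix (Fin m) (Fin m) ℝ)]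
  push_cast
  refine Finset.sum_congr rfl fun i _ => Finset.sum_congr rfl fun j _ => ?_
  split_ifs with h
  · simp
  · simp [X.2 i j (not_lt.1 h)]

lemma linearMap_ext {M : Type*} [AddCommGroup M] [Module ℝ M] {f g : strictUpper m →ₗ[ℝ] M}
    (h : ∀ i j (hij : i < j), f (single i j hij) = g (single i j hij)) : f = g := by
  ext X
  rw [eq_sum_single X]
  simp only [map_sum, apply_dite, map_smul, map_zero, h]

end strictUpper

namespace IsClosed2Form

variable {L : Type*} [LieRing L] [LieAlgebra ℝ L] {ω : L →ₗ[ℝ] L →ₗ[ℝ] ℝ}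

lemma apply_lie_eq_zero_s8 (hω : IsClosed2Form ω) {a b d : L} (hbd : ⁅b, d⁆ = 0)
    (hda : ⁅d, a⁆ = 0) : ω ⁅a, b⁆ d = 0 := by
  simpa [hbd, hda] using hω a b d

lemma apply_lie_lie_eq_zero (hω : IsClosed2Form ω) (halt : ω.IsAlt) {a b c : L}
    (hac : ⁅a, c⁆ = 0) (hbab : ⁅b, ⁅a, b⁆⁆ = 0) (hbcb : ⁅⁅b, c⁆, b⁆ = 0) :
    ω ⁅⁅a, b⁆, c⁆ b = 0 := by
  have jacobi : ⁅a, ⁅b, c⁆⁆ = ⁅⁅a, b⁆, c⁆ := by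
    rw [leibniz_lie, hac, lie_zero, add_zero]
  have h₁ := hω a ⁅b, c⁆ b
  have h₂ := hω ⁅a, b⁆ c b
  rw [jacobi, hbcb, ← lie_skew b a] at h₁
  rw [hbab, ← lie_skew c b] at h₂
  simp only [map_neg, map_zero, LinearMap.neg_apply, LinearMap.zero_apply, add_zero] at h₁ h₂
  linarith [halt.neg ⁅a, b⁆ ⁅b, c⁆]

lemma compl₁₂ {L' : Type*} [LieRing L'] [LieAlgebra ℝ L'] (hω : IsClosed2Form ω)
    (f : L' →ₗ⁅ℝ⁆ L) : IsClosed2Form (ω.compl₁₂ (f : L' →ₗ[ℝ] L) f) := fun x y z => by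
  simpa using hω (f x) (f y) (f z)

end IsClosed2Form

lemma IsClosed2Form.apply_inr_lie_inl_eq_zero {K L : Type*} [LieRing K] [LieAlgebra ℝ K]
    [LieRing L] [LieAlgebra ℝ L] {ω : K × L →ₗ[ℝ] K × L →ₗ[ℝ] ℝ} (hω : IsClosed2Form ω)
    (a b : L) (v : K) : ω (0, ⁅a, b⁆) (v, 0) = 0 := by
  have hlie : ((0 : K), ⁅a, b⁆) = ⁅((0 : K), a), ((0 : K), b)⁆ := Prod.ext (zero_lie 0).symm rfl
  rw [hlie]
  exact hω.apply_lie_eq_zero_s8 (Prod.ext (zero_lie _) (lie_zero _))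
    (Prod.ext (lie_zero _) (zero_lie _))

open strictUpper in
lemma IsClosed2Form.apply_single_zero_last_eq_zero {n : ℕ} (hn : 3 ≤ n)
    {Ω : strictUpper (n + 1) →ₗ[ℝ] strictUpper (n + 1) →ₗ[ℝ] ℝ} (hΩ : IsClosed2Form Ω)
    (halt : Ω.IsAlt) (h : (0 : Fin (n + 1)) < Fin.last n) : Ω (single 0 (Fin.last n) h) = 0 := by
  refine linearMap_ext fun i j hij => ?_
  have hj0 : j ≠ 0 := ((Fin.zero_le i).trans_lt hij).ne'
  have hni : Fin.last n ≠ i := (hij.trans_le (Fin.le_last j)).ne'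
  rw [LinearMap.zero_apply]
  -- For `n = 3` there is no `k` with `0 < k < n` and `k ∉ {1, 2}`, so `E₁₂` needs its own argument.
  by_cases hspecial : i.val = 1 ∧ j.val = 2
  · rcases i with ⟨_, hi⟩
    rcases j with ⟨_, hj⟩
    obtain ⟨rfl, rfl⟩ := hspecial
    have h01 : (0 : Fin (n + 1)) < ⟨1, hi⟩ := Fin.mk_lt_mk.2 one_pos
    have h2n : (⟨2, hj⟩ : Fin (n + 1)) < Fin.last n := Fin.mk_lt_mk.2 (by omega)
    have := hΩ.apply_lie_lie_eq_zero halt (a := single _ _ h01) (b := single _ _ hij)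
      (c := single _ _ h2n) (single_lie_single_of_ne _ _ (by simp) h.ne')
      (by rw [single_lie_single, single_lie_single_of_ne] <;> simp)
      (by rw [single_lie_single, single_lie_single_of_ne] <;> simp [Fin.ext_iff]; omega)
    rwa [single_lie_single, single_lie_single] at this
  · obtain ⟨k, hk0, hkn, hki, hkj⟩ : ∃ k : ℕ, 0 < k ∧ k < n ∧ k ≠ i ∧ k ≠ j :=
      ⟨if i.val = 1 ∨ j.val = 1 then 2 else 1, by split_ifs <;> omega⟩
    have h0k : (0 : Fin (n + 1)) < ⟨k, by omega⟩ := Fin.mk_lt_mk.2 hk0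
    have hkn' : (⟨k, by omega⟩ : Fin (n + 1)) < Fin.last n := Fin.mk_lt_mk.2 hkn
    rw [← single_lie_single h0k hkn']
    exact hΩ.apply_lie_eq_zero_s8 (single_lie_single_of_ne _ _ hni (Fin.ne_of_val_ne hkj.symm))
      (single_lie_single_of_ne _ _ hj0 (Fin.ne_of_val_ne hki))

open strictUpper in
/-- For `n ≥ 3`, no trivial extension `ℝ^s × 𝔱` of the Lie algebra of strictly upper triangular
`(n+1) × (n+1)` real matrices admits a symplectic structure. -/
theorem no_symplectic_on_strictUpper_extension (n : ℕ) (hn : 3 ≤ n) (s : ℕ) :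
    ¬ ∃ ω : ((Fin s → ℝ) × strictUpper (n + 1)) →ₗ[ℝ]
        ((Fin s → ℝ) × strictUpper (n + 1)) →ₗ[ℝ] ℝ,
      IsSymplecticForm ω := by
  rintro ⟨ω, halt, hclosed, hnondeg⟩
  have h0n : (0 : Fin (n + 1)) < Fin.last n := Fin.lt_def.2 (by simp; omega)
  have h01 : (0 : Fin (n + 1)) < ⟨1, by omega⟩ := Fin.mk_lt_mk.2 one_pos
  have h1n : (⟨1, by omega⟩ : Fin (n + 1)) < Fin.last n := Fin.mk_lt_mk.2 (by omega)
  obtain ⟨y, hy⟩ := hnondeg (0, single 0 (Fin.last n) h0n) (by simp [single_ne_zero])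
  have hinl : ω (0, single 0 (Fin.last n) h0n) (y.1, 0) = 0 := by
    rw [← single_lie_single h01 h1n]
    exact hclosed.apply_inr_lie_inl_eq_zero _ _ _
  have hinr : ω (0, single 0 (Fin.last n) h0n) (0, y.2) = 0 := by
    have := (hclosed.compl₁₂ (LieHom.inr ℝ _ _)).apply_single_zero_last_eq_zero hn
      (fun _ => halt _) h0n
    simpa using congrArg (· y.2) this
  exact hy (by rw [← Prod.fst_add_snd y, map_add, hinl, hinr, add_zero])
end

section
/- Let n ≥ 3, let S be the (2n+1)×(2n+1) real matrix with entries S_{i,2n+2-i} = 1 for all i and all other entries 0, and let 𝔫 = { X ∈ M_{2n+1}(ℝ) : X is strictly upper triangular and XᵀS + SX = 0 }, a Lie subalgebra of gl(2n+1,ℝ) under the commutator bracket (the nilradical of the minimal parabolic subalgebra of the split form so(n,n+1) of so(2n+1,ℂ)). Then 𝔫 is nilpotent and E_∞^{0,2}(𝔫) = 0: for every j with 𝔫^j ≠ 0 and 𝔫^{j+1} = 0, every closed 2-form ω on 𝔫 satisfies ω(x,y) = 0 for all x ∈ 𝔫^j, y ∈ 𝔫. Consequently, for every s ≥ 0 the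 product Lie algebra ℝ^s × 𝔫 admits no symplectic structure. -/
/-!
Indexing rows and columns by `0, …, 2n`, the matrices `e_{ab} = E_{ab} - E_{2n-b,2n-a}` with
`a < b`, `a + b < 2n` (the positive root vectors) span `𝔫`, and the `t`-th term of the lower central
series vanishes below the `(t+1)`-st superdiagonal. Hence `𝔫^{2n-1} = 0` while `𝔫^{2n-2}` is
spanned by the highest root vector `z = e_{0,2n-1}`. If `ω` is closed, `ω(z, e_{kl}) = 0`: the
cocycle identity for `z = [e_{0r}, e_{r,2n-1}]` kills it as soon as `e_{kl}` commutes with both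
factors, and such an `r` exists except for `e_{01}` and, when `n = 3`, `e_{23}`; these two are
settled by small linear systems of cocycle identities. On `ℝ^s × 𝔫` the vector `(0, z)` is then in
the radical of every closed 2-form, since `z` is a bracket in `𝔫` and the two factors commute.
-/

set_option synthInstance.maxHeartbeats 1000000

open Matrix

attribute [local instance 100] LieRing.ofAssociativeRing

/-- The Lie algebra of strictly upper triangular matrices `X` with `Xᵀ J + J X = 0`. -/
def nilradOf {m : ℕ} (J : Matrix (Fin m) (Fin m) ℝ) :
    LieSubalgebra ℝ (Matrix (Fin m) (Fin m) ℝ) where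
  carrier := {X | (∀ i j : Fin m, j ≤ i → X i j = 0) ∧ Xᵀ * J + J * X = 0}
  add_mem' := fun {X Y} hX hY => by
    refine ⟨fun i j h => by simp [Matrix.add_apply, hX.1 i j h, hY.1 i j h], ?_⟩
    have h1 := hX.2
    have h2 := hY.2
    calc (Xᵀ + Yᵀ) * J + J * (X + Y) = (Xᵀ * J + J * X) + (Yᵀ * J + J * Y) := by
          rw [add_mul, mul_add]; abel
      _ = 0 := by rw [h1, h2, add_zero]
  zero_mem' := ⟨fun i j _ => rfl, by simp⟩
  smul_mem' := fun t {X} hX => by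
    refine ⟨fun i j h => by simp [Matrix.smul_apply, hX.1 i j h], ?_⟩
    rw [Matrix.transpose_smul, Matrix.smul_mul, Matrix.mul_smul, ← smul_add, hX.2, smul_zero]
  lie_mem' := fun {X Y} hX hY => by
    refine ⟨fun i j h => by
      rw [Ring.lie_def, Matrix.sub_apply, strict_mul_zero X Y hX.1 hY.1 h,
        strict_mul_zero Y X hY.1 hX.1 h, sub_zero], ?_⟩
    have hX' : Xᵀ * J = -(J * X) := eq_neg_of_add_eq_zero_left hX.2
    have hY' : Yᵀ * J = -(J * Y) := eq_neg_of_add_eq_zero_left hY.2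
    have e1 : Yᵀ * Xᵀ * J = J * Y * X := by
      rw [mul_assoc, hX', mul_neg, ← mul_assoc, hY', neg_mul, neg_neg]
    have e2 : Xᵀ * Yᵀ * J = J * X * Y := by
      rw [mul_assoc, hY', mul_neg, ← mul_assoc, hX', neg_mul, neg_neg]
    rw [Ring.lie_def, Matrix.transpose_sub, Matrix.transpose_mul, Matrix.transpose_mul,
      sub_mul, e1, e2, mul_sub]
    noncomm_ring

/-- The defining matrix of the symmetric form for `so(n, n+1)` (1-indexed:
`S_{i, 2n+2-i} = 1` for all `i`). -/
def soOddS (n : ℕ) : Matrix (Fin (2 * n + 1)) (Fin (2 * n + 1)) ℝ :=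
  Matrix.of fun i j => if (i : ℕ) + (j : ℕ) = 2 * n then 1 else 0

section ClosedForms

variable {L M : Type*} [LieRing L] [LieAlgebra ℝ L] [LieRing M] [LieAlgebra ℝ M]

theorem IsClosed2Form.apply_lie_eq_zero_s10 {ω : L →ₗ[ℝ] L →ₗ[ℝ] ℝ} (hω : IsClosed2Form ω)
    {x y w : L} (hyw : ⁅y, w⁆ = 0) (hwx : ⁅w, x⁆ = 0) : ω ⁅x, y⁆ w = 0 := by
  simpa [hyw, hwx] using hω x y w

theorem IsClosed2Form.comp_lieHom {ω : L →ₗ[ℝ] L →ₗ[ℝ] ℝ} (hω : IsClosed2Form ω)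
    (f : M →ₗ⁅ℝ⁆ L) : IsClosed2Form ((ω.comp (f : M →ₗ[ℝ] L)).compl₂ (f : M →ₗ[ℝ] L)) := by
  intro x y z
  simpa only [LinearMap.compl₂_apply, LinearMap.comp_apply, LieHom.coe_toLinearMap,
    LieHom.map_lie] using hω (f x) (f y) (f z)

theorem not_isSymplecticForm_prod {x y : M} (hxy : ⁅x, y⁆ ≠ 0)
    (hM : ∀ ω : M →ₗ[ℝ] M →ₗ[ℝ] ℝ, (∀ m, ω m m = 0) → IsClosed2Form ω → ∀ m, ω ⁅x, y⁆ m = 0)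
    (ω : L × M →ₗ[ℝ] L × M →ₗ[ℝ] ℝ) : ¬ IsSymplecticForm ω := by
  rintro ⟨halt, hcl, hnd⟩
  have hlie : ⁅((0 : L), x), ((0 : L), y)⁆ = (0, ⁅x, y⁆) := Prod.ext (lie_zero 0) rfl
  obtain ⟨w, hw⟩ := hnd (0, ⁅x, y⁆) fun h => hxy (congrArg Prod.snd h)
  have hfst : ω (0, ⁅x, y⁆) (w.1, 0) = 0 := by
    rw [← hlie]
    exact hcl.apply_lie_eq_zero_s10 (Prod.ext (zero_lie _) (lie_zero _))
      (Prod.ext (lie_zero _) (zero_lie _))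
  have hsnd : ω (0, ⁅x, y⁆) (0, w.2) = 0 :=
    hM _ (fun m => halt (0, m)) (hcl.comp_lieHom (LieHom.inr ℝ L M)) w.2
  apply hw
  rw [show w = (w.1, 0) + (0, w.2) by simp, map_add, hfst, hsnd, add_zero]

end ClosedForms

namespace Matrix

variable {N : ℕ} {R : Type*}

def IsBandAbove [Zero R] (t : ℕ) (X : Matrix (Fin N) (Fin N) R) : Prop :=
  ∀ i j : Fin N, (j : ℕ) < i + t → X i j = 0

theorem IsBandAbove.mono [Zero R] {s t : ℕ} {X : Matrix (Fin N) (Fin N) R}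
    (hX : X.IsBandAbove t) (hst : s ≤ t) : X.IsBandAbove s :=
  fun i j hij => hX i j (by omega)

theorem IsBandAbove.mul [NonUnitalNonAssocSemiring R] {s t : ℕ} {X Y : Matrix (Fin N) (Fin N) R}
    (hX : X.IsBandAbove s) (hY : Y.IsBandAbove t) : (X * Y).IsBandAbove (s + t) := by
  intro i j hij
  rw [mul_apply]
  refine Finset.sum_eq_zero fun k _ => ?_
  by_cases hk : (k : ℕ) < i + s
  · rw [hX i k hk, zero_mul]
  · rw [hY k j (by omega), mul_zero]

theorem IsBandAbove.lie [Ring R] {s t : ℕ} {X Y : Matrix (Fin N) (Fin N) R}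
    (hX : X.IsBandAbove s) (hY : Y.IsBandAbove t) : IsBandAbove (s + t) ⁅X, Y⁆ := by
  intro i j hij
  rw [Ring.lie_def, sub_apply, hX.mul hY i j hij, hY.mul hX i j (by omega), sub_zero]

end Matrix

namespace SoOddNilradical

variable {n : ℕ}

local notation "𝔫" => nilradOf (soOddS n)

theorem soOddS_eq_toMatrix :
    soOddS n = (Fin.revPerm : Equiv.Perm (Fin (2 * n + 1))).toPEquiv.toMatrix := by
  ext i j
  simp only [soOddS, of_apply, PEquiv.toMatrix_apply, Equiv.toPEquiv_apply, Option.mem_def,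
    Option.some.injEq, Fin.revPerm_apply, Fin.ext_iff, Fin.val_rev]
  congr 1
  apply propext
  omega

theorem mem_nilradOf_iff {X : Matrix (Fin (2 * n + 1)) (Fin (2 * n + 1)) ℝ} :
    X ∈ 𝔫 ↔ (∀ i j, j ≤ i → X i j = 0) ∧ ∀ i j, X i j + X j.rev i.rev = 0 := by
  have hcond : Xᵀ * soOddS n + soOddS n * X = 0 ↔ ∀ i j, X i j + X j.rev i.rev = 0 := by
    rw [soOddS_eq_toMatrix, PEquiv.mul_toMatrix_toPEquiv, PEquiv.toMatrix_toPEquiv_mul]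
    constructor
    · intro h i j
      simpa [add_comm] using congr_fun₂ h i.rev j
    · intro h
      ext i j
      simpa [add_comm] using h i.rev j
  exact and_congr_right' hcond

theorem apply_rev_eq_zero_of_mem {X : Matrix (Fin (2 * n + 1)) (Fin (2 * n + 1)) ℝ} (hX : X ∈ 𝔫)
    (i : Fin (2 * n + 1)) : X i i.rev = 0 := by
  have := (mem_nilradOf_iff.mp hX).2 i i.rev
  rw [Fin.rev_rev] at this
  linarith

variable (n) in
def singleNat (a b : ℕ) : Matrix (Fin (2 * n + 1)) (Fin (2 * n + 1)) ℝ :=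
  of fun i j => if (i : ℕ) = a ∧ (j : ℕ) = b then 1 else 0

theorem singleNat_mul_singleNat_of_eq {a b c d : ℕ} (hbc : b = c) (hb : b ≤ 2 * n) :
    singleNat n a b * singleNat n c d = singleNat n a d := by
  subst hbc
  ext i j
  rw [mul_apply, Finset.sum_eq_single ⟨b, by omega⟩]
  · by_cases hi : (i : ℕ) = a <;> by_cases hj : (j : ℕ) = d <;> simp [singleNat, hi, hj]
  · intro k _ hk
    simp [singleNat, Fin.ext_iff.not.mp hk]
  · simp

theorem singleNat_mul_singleNat_of_ne {a b c d : ℕ} (hbc : b ≠ c) :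
    singleNat n a b * singleNat n c d = 0 := by
  ext i j
  rw [mul_apply, Matrix.zero_apply]
  refine Finset.sum_eq_zero fun k _ => ?_
  by_cases hk : (k : ℕ) = b
  · simp [singleNat, hk, hbc]
  · simp [singleNat, hk]

variable (n) in
def rootMatrix (a b : ℕ) : Matrix (Fin (2 * n + 1)) (Fin (2 * n + 1)) ℝ :=
  singleNat n a b - singleNat n (2 * n - b) (2 * n - a)

section Brackets

variable {a b c d : ℕ} (ha : a ≤ 2 * n) (hb : b ≤ 2 * n) (hc : c ≤ 2 * n)
include ha hb hc

theorem rootMatrix_lie_rootMatrix_of_chain (hac : a ≠ c) (hab : a + b ≠ 2 * n)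
    (hbc : b + c ≠ 2 * n) : ⁅rootMatrix n a b, rootMatrix n b c⁆ = rootMatrix n a c := by
  simp (disch := omega) only [rootMatrix, Ring.lie_def, sub_mul, mul_sub,
    singleNat_mul_singleNat_of_eq, singleNat_mul_singleNat_of_ne]
  abel

theorem rootMatrix_lie_rootMatrix_of_anti (hbc : b ≠ c) (hab : a + b ≠ 2 * n)
    (hac : a + c ≠ 2 * n) :
    ⁅rootMatrix n a b, rootMatrix n c (2 * n - b)⁆ = -rootMatrix n a (2 * n - c) := by
  simp (disch := omega) only [rootMatrix, Ring.lie_def, sub_mul, mul_sub, Nat.sub_sub_self,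
    singleNat_mul_singleNat_of_eq, singleNat_mul_singleNat_of_ne]
  abel

theorem rootMatrix_lie_rootMatrix_eq_zero (hd : d ≤ 2 * n) (hbc : b ≠ c) (hda : d ≠ a)
    (hbd : b + d ≠ 2 * n) (hac : a + c ≠ 2 * n) : ⁅rootMatrix n a b, rootMatrix n c d⁆ = 0 := by
  simp (disch := omega) only [rootMatrix, Ring.lie_def, sub_mul, mul_sub,
    singleNat_mul_singleNat_of_ne]
  abel

end Brackets

theorem rootMatrix_apply (a b : ℕ) (i j : Fin (2 * n + 1)) :
    rootMatrix n a b i j = (if (i : ℕ) = a ∧ (j : ℕ) = b then 1 else 0) -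
      (if (i : ℕ) = 2 * n - b ∧ (j : ℕ) = 2 * n - a then 1 else 0) := rfl

theorem rootMatrix_mem {a b : ℕ} (hab : a < b) (hb : b ≤ 2 * n) : rootMatrix n a b ∈ 𝔫 := by
  refine mem_nilradOf_iff.mpr ⟨fun i j hji => ?_, fun i j => ?_⟩
  · rw [Fin.le_def] at hji
    rw [rootMatrix_apply, if_neg (by omega), if_neg (by omega), sub_zero]
  · simp only [rootMatrix_apply, Fin.val_rev]
    split_ifs <;> first | omega | norm_num

variable (n) in
def rootVector (a b : ℕ) : 𝔫 :=
  if h : a < b ∧ b ≤ 2 * n then ⟨rootMatrix n a b, rootMatrix_mem h.1 h.2⟩ else 0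

theorem coe_rootVector {a b : ℕ} (hab : a < b) (hb : b ≤ 2 * n) :
    (rootVector n a b : Matrix (Fin (2 * n + 1)) (Fin (2 * n + 1)) ℝ) = rootMatrix n a b := by
  rw [rootVector, dif_pos ⟨hab, hb⟩]

theorem rootMatrix_val_apply (a b i j : Fin (2 * n + 1)) :
    rootMatrix n a b i j =
      (if (a, b) = (i, j) then 1 else 0) - (if (a, b) = (j.rev, i.rev) then 1 else 0) := by
  simp only [rootMatrix_apply, Prod.mk.injEq, Fin.ext_iff, Fin.val_rev]
  congr 2 <;> apply propext <;> omega

variable (n) in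
def positiveRootIndices : Finset (Fin (2 * n + 1) × Fin (2 * n + 1)) :=
  {p | p.1 < p.2 ∧ (p.1 : ℕ) + p.2 < 2 * n}

theorem sum_smul_rootMatrix_eq {X : Matrix (Fin (2 * n + 1)) (Fin (2 * n + 1)) ℝ} (hX : X ∈ 𝔫) :
    ∑ p ∈ positiveRootIndices n, X p.1 p.2 • rootMatrix n p.1 p.2 = X := by
  obtain ⟨hlow, hanti⟩ := mem_nilradOf_iff.mp hX
  ext i j
  simp only [Matrix.sum_apply, Matrix.smul_apply, smul_eq_mul, rootMatrix_val_apply, mul_sub,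
    mul_ite, mul_one, mul_zero, Finset.sum_sub_distrib, Finset.sum_ite_eq', positiveRootIndices,
    Finset.mem_filter, Finset.mem_univ, true_and, Fin.lt_def, Fin.val_rev]
  split_ifs with hpos hneg hneg
  · omega
  · rw [sub_zero]
  · linarith [hanti i j]
  · rcases le_or_gt j i with hji | hij
    · rw [hlow i j hji, sub_zero]
    · obtain rfl : j = i.rev := Fin.ext (by rw [Fin.val_rev]; omega)
      rw [apply_rev_eq_zero_of_mem hX, sub_zero]

theorem mem_span_rootVector (y : 𝔫) :
    y ∈ Submodule.span ℝ {v | ∃ a b, a < b ∧ a + b < 2 * n ∧ rootVector n a b = v} := by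
  have hy : ∑ p ∈ positiveRootIndices n,
      (y : Matrix (Fin (2 * n + 1)) (Fin (2 * n + 1)) ℝ) p.1 p.2 • rootVector n p.1 p.2 = y := by
    ext1
    rw [AddSubmonoidClass.coe_finsetSum]
    refine (Finset.sum_congr rfl fun p hp => ?_).trans (sum_smul_rootMatrix_eq y.2)
    simp only [positiveRootIndices, Finset.mem_filter, Fin.lt_def] at hp
    rw [SetLike.val_smul, coe_rootVector hp.2.1 (by omega)]
  rw [← hy]
  refine Submodule.sum_mem _ fun p hp => Submodule.smul_mem _ _ (Submodule.subset_span ?_)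
  simp only [positiveRootIndices, Finset.mem_filter, Fin.lt_def] at hp
  exact ⟨p.1, p.2, hp.2.1, hp.2.2, rfl⟩

theorem rootVector_lie_rootVector_of_chain (a b c : ℕ) (hab : a < b := by omega)
    (hbc : b < c := by omega) (hc : c ≤ 2 * n := by omega) (hab' : a + b ≠ 2 * n := by omega)
    (hbc' : b + c ≠ 2 * n := by omega) :
    ⁅rootVector n a b, rootVector n b c⁆ = rootVector n a c := by
  ext1
  rw [LieSubalgebra.coe_bracket, coe_rootVector hab (by omega), coe_rootVector hbc hc,
    coe_rootVector (by omega) hc]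
  exact rootMatrix_lie_rootMatrix_of_chain (by omega) (by omega) hc (by omega) hab' hbc'

theorem rootVector_lie_rootVector_of_anti (a b c : ℕ) (hab : a < b := by omega)
    (hb : b ≤ 2 * n := by omega) (hcb : c + b < 2 * n := by omega)
    (hac : a + c < 2 * n := by omega) (hbc : b ≠ c := by omega)
    (hab' : a + b ≠ 2 * n := by omega) :
    ⁅rootVector n a b, rootVector n c (2 * n - b)⁆ = -rootVector n a (2 * n - c) := by
  ext1
  rw [LieSubalgebra.coe_bracket, coe_rootVector hab hb, coe_rootVector (by omega) (by omega),
    NegMemClass.coe_neg, coe_rootVector (by omega) (by omega)]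
  exact rootMatrix_lie_rootMatrix_of_anti (by omega) hb (by omega) hbc hab' (by omega)

theorem rootVector_lie_rootVector_eq_zero (a b c d : ℕ) (hab : a < b := by omega)
    (hb : b ≤ 2 * n := by omega) (hcd : c < d := by omega) (hd : d ≤ 2 * n := by omega)
    (hbc : b ≠ c := by omega) (hda : d ≠ a := by omega) (hbd : b + d ≠ 2 * n := by omega)
    (hac : a + c ≠ 2 * n := by omega) : ⁅rootVector n a b, rootVector n c d⁆ = 0 := by
  ext1
  rw [LieSubalgebra.coe_bracket, coe_rootVector hab hb, coe_rootVector hcd hd]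
  exact rootMatrix_lie_rootMatrix_eq_zero (by omega) hb (by omega) hd hbc hda hbd hac

theorem rootVector_ne_zero {a b : ℕ} (hab : a < b) (hb : b ≤ 2 * n) (habn : a + b ≠ 2 * n) :
    rootVector n a b ≠ 0 := by
  intro h
  have := congrArg (fun x : 𝔫 => (x : Matrix (Fin (2 * n + 1)) (Fin (2 * n + 1)) ℝ)
    ⟨a, by omega⟩ ⟨b, by omega⟩) h
  simp only [coe_rootVector hab hb, rootMatrix_apply, and_self, if_true] at this
  rw [if_neg (by omega)] at this
  norm_num at this

variable (n) in
def highestRootVector : 𝔫 :=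
  rootVector n 0 (2 * n - 1)

theorem isBandAbove_one_of_mem {X : Matrix (Fin (2 * n + 1)) (Fin (2 * n + 1)) ℝ} (hX : X ∈ 𝔫) :
    X.IsBandAbove 1 :=
  fun i j hij => (mem_nilradOf_iff.mp hX).1 i j (Fin.le_def.mpr (by omega))

variable (n) in
def bandIdeal (t : ℕ) : LieIdeal ℝ 𝔫 where
  carrier := {x | (x : Matrix (Fin (2 * n + 1)) (Fin (2 * n + 1)) ℝ).IsBandAbove t}
  add_mem' {x y} hx hy i j hij := by simp [hx i j hij, hy i j hij]
  zero_mem' _ _ _ := rfl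
  smul_mem' c x hx i j hij := by simp [hx i j hij]
  lie_mem {x y} hy := ((isBandAbove_one_of_mem x.2).lie hy).mono (by omega)

theorem lowerCentralSeries_le_bandIdeal (t : ℕ) :
    LieModule.lowerCentralSeries ℝ 𝔫 𝔫 t ≤ bandIdeal n (t + 1) := by
  induction t with
  | zero => exact fun x _ => isBandAbove_one_of_mem x.2
  | succ t ih =>
    rw [LieModule.lowerCentralSeries_succ, LieSubmodule.lie_le_iff]
    exact fun x _ y hy => ((isBandAbove_one_of_mem x.2).lie (ih hy)).mono (by omega)

theorem lowerCentralSeries_eq_bot : LieModule.lowerCentralSeries ℝ 𝔫 𝔫 (2 * n - 1) = ⊥ := by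
  refine (LieSubmodule.eq_bot_iff _).mpr fun x hx => ?_
  have hband := lowerCentralSeries_le_bandIdeal (2 * n - 1) hx
  ext i j
  by_cases hij : (j : ℕ) < i + (2 * n - 1 + 1)
  · exact hband i j hij
  · obtain rfl : j = i.rev := Fin.ext (by rw [Fin.val_rev]; omega)
    exact apply_rev_eq_zero_of_mem x.2 i

theorem rootVector_mem_lowerCentralSeries {t : ℕ} (ht : t + 2 ≤ 2 * n) :
    rootVector n 0 (t + 1) ∈ LieModule.lowerCentralSeries ℝ 𝔫 𝔫 t := by
  induction t with
  | zero => exact LieSubmodule.mem_top _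
  | succ t ih =>
    have hlie := LieSubmodule.lie_mem_lie (LieSubmodule.mem_top (rootVector n (t + 1) (t + 2)))
      (ih (by omega))
    rw [← lie_skew, rootVector_lie_rootVector_of_chain 0 (t + 1) (t + 2), neg_mem_iff] at hlie
    rwa [LieModule.lowerCentralSeries_succ]

theorem highestRootVector_ne_zero (hn : 1 ≤ n) : highestRootVector n ≠ 0 :=
  rootVector_ne_zero (by omega) (by omega) (by omega)

theorem highestRootVector_mem_lowerCentralSeries (hn : 1 ≤ n) :
    highestRootVector n ∈ LieModule.lowerCentralSeries ℝ 𝔫 𝔫 (2 * n - 2) := by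
  have hmem := rootVector_mem_lowerCentralSeries (n := n) (t := 2 * n - 2) (by omega)
  rwa [show 2 * n - 2 + 1 = 2 * n - 1 by omega] at hmem

theorem nilpotencyLength_eq (hn : 1 ≤ n) : LieModule.nilpotencyLength 𝔫 𝔫 = 2 * n - 1 := by
  rw [show 2 * n - 1 = 2 * n - 2 + 1 by omega, LieModule.nilpotencyLength_eq_succ_iff ℝ]
  refine ⟨?_, fun h => highestRootVector_ne_zero hn ?_⟩
  · rw [show 2 * n - 2 + 1 = 2 * n - 1 by omega, lowerCentralSeries_eq_bot]
  · simpa [h] using highestRootVector_mem_lowerCentralSeries hn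

theorem exists_eq_smul_of_mem_lowerCentralSeries (hn : 1 ≤ n) {x : 𝔫}
    (hx : x ∈ LieModule.lowerCentralSeries ℝ 𝔫 𝔫 (2 * n - 2)) :
    ∃ c : ℝ, x = c • highestRootVector n := by
  have hband := lowerCentralSeries_le_bandIdeal (2 * n - 2) hx
  refine ⟨(x : Matrix (Fin (2 * n + 1)) (Fin (2 * n + 1)) ℝ) 0 ⟨2 * n - 1, by omega⟩, ?_⟩
  ext i j
  rw [SetLike.val_smul, highestRootVector, coe_rootVector (by omega) (by omega), Matrix.smul_apply,
    rootMatrix_apply]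
  by_cases hij : (j : ℕ) < i + (2 * n - 2 + 1)
  · rw [hband i j hij, if_neg (by omega), if_neg (by omega), sub_zero, smul_zero]
  rcases (by omega : (i : ℕ) = 0 ∧ (j : ℕ) = 2 * n - 1 ∨ (i : ℕ) = 1 ∧ (j : ℕ) = 2 * n ∨
      (i : ℕ) = 0 ∧ (j : ℕ) = 2 * n) with h | h | h
  · rw [if_pos h, if_neg (by omega), sub_zero, smul_eq_mul, mul_one]
    rw [show i = 0 from Fin.ext h.1, show j = ⟨2 * n - 1, by omega⟩ from Fin.ext h.2]
  · have hanti := (mem_nilradOf_iff.mp x.2).2 i j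
    rw [show j.rev = 0 from Fin.ext (by simp only [Fin.val_rev, Fin.val_zero]; omega),
      show i.rev = ⟨2 * n - 1, by omega⟩ from Fin.ext (by simp only [Fin.val_rev]; omega)] at hanti
    rw [if_neg (by omega), if_pos (by omega), zero_sub, smul_eq_mul, mul_neg_one]
    linarith
  · obtain rfl : j = i.rev := Fin.ext (by rw [Fin.val_rev]; omega)
    rw [apply_rev_eq_zero_of_mem x.2, if_neg (by omega), if_neg (by omega), sub_zero, smul_zero]

theorem exists_avoiding_index {k l : ℕ} (hn : 3 ≤ n) (hkl : k < l) (hl : 2 ≤ l)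
    (hkl' : k + l < 2 * n) (hspecial : ¬(n = 3 ∧ k = 2 ∧ l = 3)) :
    ∃ r, 2 ≤ r ∧ r + 2 ≤ 2 * n ∧ r ≠ k ∧ r ≠ l ∧ r + k ≠ 2 * n ∧ r + l ≠ 2 * n := by
  by_contra! h
  have := h 2; have := h 3; have := h 4; have := h 5; have := h 6
  omega

section Cocycle

variable {ω : nilradOf (soOddS n) →ₗ[ℝ] nilradOf (soOddS n) →ₗ[ℝ] ℝ} (hω : IsClosed2Form ω)
include hω

theorem apply_rootVector_add_apply_rootVector_eq_zero (a r : ℕ) (ha : 1 ≤ a := by omega)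
    (hr : 2 ≤ r := by omega) (har : a ≠ r := by omega) (har' : a + r < 2 * n := by omega) :
    ω (rootVector n 0 (2 * n - r)) (rootVector n 0 r) +
      ω (rootVector n 0 (2 * n - a)) (rootVector n 0 a) = 0 := by
  have hcocycle := hω (rootVector n 0 a) (rootVector n a (2 * n - r)) (rootVector n 0 r)
  rwa [rootVector_lie_rootVector_of_chain 0 a (2 * n - r), ← lie_skew,
    rootVector_lie_rootVector_of_anti 0 r a, neg_neg, rootVector_lie_rootVector_eq_zero 0 r 0 a,
    map_zero, LinearMap.zero_apply, add_zero] at hcocycle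

theorem apply_highestRootVector_rootVector_zero_one (hn : 3 ≤ n) :
    ω (highestRootVector n) (rootVector n 0 1) = 0 := by
  have h12 := apply_rootVector_add_apply_rootVector_eq_zero hω 1 2
  have h13 := apply_rootVector_add_apply_rootVector_eq_zero hω 1 3
  have h23 := apply_rootVector_add_apply_rootVector_eq_zero hω 2 3
  rw [highestRootVector]
  linarith

theorem apply_highestRootVector_rootVector_of_avoiding {k l r : ℕ} (hkl : k < l) (hl : 2 ≤ l)
    (hkl' : k + l < 2 * n) (hr : 2 ≤ r) (hr' : r + 2 ≤ 2 * n) (hrk : r ≠ k) (hrl : r ≠ l)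
    (hrk' : r + k ≠ 2 * n) (hrl' : r + l ≠ 2 * n) :
    ω (highestRootVector n) (rootVector n k l) = 0 := by
  rw [highestRootVector, ← rootVector_lie_rootVector_of_chain 0 r (2 * n - 1)]
  exact hω.apply_lie_eq_zero_s10 (rootVector_lie_rootVector_eq_zero r (2 * n - 1) k l)
    (rootVector_lie_rootVector_eq_zero k l 0 r)

end Cocycle

theorem apply_highestRootVector_rootVector_two_three
    {ω : nilradOf (soOddS 3) →ₗ[ℝ] nilradOf (soOddS 3) →ₗ[ℝ] ℝ} (halt : ω.IsAlt)
    (hω : IsClosed2Form ω) : ω (highestRootVector 3) (rootVector 3 2 3) = 0 := by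
  rw [highestRootVector]
  have h1 := hω (rootVector 3 0 1) (rootVector 3 1 3) (rootVector 3 1 4)
  have h2 := hω (rootVector 3 0 2) (rootVector 3 1 4) (rootVector 3 2 3)
  have h3 := hω (rootVector 3 0 3) (rootVector 3 1 3) (rootVector 3 2 3)
  rw [rootVector_lie_rootVector_of_chain 0 1 3, rootVector_lie_rootVector_eq_zero 1 3 1 4,
    ← lie_skew, rootVector_lie_rootVector_of_chain 0 1 4] at h1
  rw [rootVector_lie_rootVector_of_anti 0 2 1, rootVector_lie_rootVector_eq_zero 1 4 2 3,
    ← lie_skew, rootVector_lie_rootVector_of_chain 0 2 3] at h2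
  rw [rootVector_lie_rootVector_of_anti 0 3 1, rootVector_lie_rootVector_of_anti 1 3 2,
    ← lie_skew, rootVector_lie_rootVector_of_anti 0 3 2, neg_neg] at h3
  simp only [map_neg, map_zero, LinearMap.neg_apply, LinearMap.zero_apply] at h1 h2 h3
  -- with `A = ω e₀₃ e₁₄`: `h1` gives `ω e₀₄ e₁₃ = A`, then `h2` and `h3` say `ω e₀₅ e₂₃ = -A = 2A`
  linarith [halt.neg (rootVector 3 0 3) (rootVector 3 1 4)]

theorem apply_highestRootVector_rootVector (hn : 3 ≤ n)
    {ω : nilradOf (soOddS n) →ₗ[ℝ] nilradOf (soOddS n) →ₗ[ℝ] ℝ} (halt : ω.IsAlt)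
    (hω : IsClosed2Form ω) {k l : ℕ} (hkl : k < l) (hkl' : k + l < 2 * n) :
    ω (highestRootVector n) (rootVector n k l) = 0 := by
  rcases (by omega : l = 1 ∨ 2 ≤ l) with rfl | hl
  · obtain rfl : k = 0 := by omega
    exact apply_highestRootVector_rootVector_zero_one hω hn
  by_cases hspecial : n = 3 ∧ k = 2 ∧ l = 3
  · obtain ⟨rfl, rfl, rfl⟩ := hspecial
    exact apply_highestRootVector_rootVector_two_three halt hω
  obtain ⟨r, hr, hr', hrk, hrl, hrk', hrl'⟩ := exists_avoiding_index hn hkl hl hkl' hspecial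
  exact apply_highestRootVector_rootVector_of_avoiding hω hkl hl hkl' hr hr' hrk hrl hrk' hrl'

theorem apply_highestRootVector_eq_zero (hn : 3 ≤ n)
    {ω : nilradOf (soOddS n) →ₗ[ℝ] nilradOf (soOddS n) →ₗ[ℝ] ℝ} (halt : ω.IsAlt)
    (hω : IsClosed2Form ω) (y : 𝔫) : ω (highestRootVector n) y = 0 := by
  have hspan : Submodule.span ℝ {v | ∃ a b, a < b ∧ a + b < 2 * n ∧ rootVector n a b = v} ≤
      LinearMap.ker (ω (highestRootVector n)) :=
    Submodule.span_le.mpr fun _ ⟨_, _, hab, hab', hv⟩ =>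
      hv ▸ apply_highestRootVector_rootVector hn halt hω hab hab'
  exact hspan (mem_span_rootVector y)

end SoOddNilradical

open SoOddNilradical

/-- For `n ≥ 3`, the nilradical of the minimal parabolic subalgebra of `so(n, n+1)` (split form
of `so(2n+1, ℂ)`) is nilpotent, has `E_∞^{0,2} = 0`, and no trivial extension of it admits a
symplectic structure. -/
theorem soOdd_nilradical_E02_eq_zero_and_no_symplectic (n : ℕ) (hn : 3 ≤ n) :
    LieRing.IsNilpotent (nilradOf (soOddS n)) ∧
    (∀ j : ℕ,
      LieModule.lowerCentralSeries ℝ (nilradOf (soOddS n)) (nilradOf (soOddS n)) j ≠ ⊥ →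
      LieModule.lowerCentralSeries ℝ (nilradOf (soOddS n)) (nilradOf (soOddS n)) (j + 1) = ⊥ →
      ∀ ω : (nilradOf (soOddS n)) →ₗ[ℝ] (nilradOf (soOddS n)) →ₗ[ℝ] ℝ,
        (∀ x : nilradOf (soOddS n), ω x x = 0) → IsClosed2Form ω →
        ∀ x ∈ LieModule.lowerCentralSeries ℝ (nilradOf (soOddS n)) (nilradOf (soOddS n)) j,
          ∀ y : nilradOf (soOddS n), ω x y = 0) ∧
    (∀ s : ℕ, ¬ ∃ ω : ((Fin s → ℝ) × nilradOf (soOddS n)) →ₗ[ℝ]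
        ((Fin s → ℝ) × nilradOf (soOddS n)) →ₗ[ℝ] ℝ, IsSymplecticForm ω) := by
  refine ⟨LieModule.IsNilpotent.mk _ lowerCentralSeries_eq_bot,
    fun j hj hj1 ω halt hω x hx y => ?_, fun s ⟨ω, hω⟩ => ?_⟩
  · obtain rfl : j = 2 * n - 2 := by
      have hlength := (LieModule.nilpotencyLength_eq_succ_iff ℝ _ _ j).mpr ⟨hj1, hj⟩
      rw [nilpotencyLength_eq (by omega)] at hlength
      omega
    obtain ⟨c, rfl⟩ := exists_eq_smul_of_mem_lowerCentralSeries (by omega) hx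
    rw [map_smul, LinearMap.smul_apply, apply_highestRootVector_eq_zero hn halt hω, smul_zero]
  · have hchain : ⁅rootVector n 0 2, rootVector n 2 (2 * n - 1)⁆ = highestRootVector n :=
      rootVector_lie_rootVector_of_chain 0 2 (2 * n - 1)
    exact not_isSymplecticForm_prod (hchain ▸ highestRootVector_ne_zero (by omega))
      (fun ω halt hω => hchain ▸ apply_highestRootVector_eq_zero hn halt hω) ω hω
end

section
/- Let 𝔥 be the real Lie algebra of strictly upper triangular 3×3 real matrices (the 3-dimensional Heisenberg Lie algebra, the nilradical of the Borel subalgebra of sl(3,ℝ)). Then the product Lie algebra ℝ × 𝔥 (with ℝ abelian) admits a symplectic structure. -/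
set_option synthInstance.maxHeartbeats 1000000

attribute [local instance 100] LieRing.ofAssociativeRing

/-!
With `X = E₀₁`, `Y = E₁₂`, `Z = E₀₂` the only bracket in `𝔥` is `[X, Y] = Z`, and `T` spans the
abelian factor `ℝ`. In the dual basis the form `X* ∧ Z* + Y* ∧ T*` is closed, since the only
nonzero differential `dZ* = -X* ∧ Y*` gets wedged with `X*`; it is nondegenerate because it pairs
`X` with `Z` and `Y` with `T`.
-/

namespace LinearMap

variable {R M : Type*} [CommRing R] [AddCommGroup M] [Module R M]

def wedge (f g : M →ₗ[R] R) : M →ₗ[R] M →ₗ[R] R :=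
  (mul R R).compl₁₂ f g - (mul R R).compl₁₂ g f

@[simp]
theorem wedge_apply (f g : M →ₗ[R] R) (x y : M) : wedge f g x y = f x * g y - g x * f y := rfl

theorem wedge_self_apply (f g : M →ₗ[R] R) (x : M) : wedge f g x x = 0 := by
  rw [wedge_apply, mul_comm, sub_self]

end LinearMap

theorem Prod.lie_fst_eq_zero {L M : Type*} [CommRing L] [LieRing M] (p q : L × M) :
    ⁅p, q⁆.1 = 0 :=
  (Commute.all p.1 q.1).lie_eq

theorem Prod.lie_snd {L M : Type*} [LieRing L] [LieRing M] (p q : L × M) :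
    ⁅p, q⁆.2 = ⁅p.2, q.2⁆ :=
  rfl

namespace strictUpper

theorem coe_apply_of_le {n : ℕ} (a : strictUpper n) {i j : Fin n} (h : j ≤ i) :
    (a : Matrix (Fin n) (Fin n) ℝ) i j = 0 :=
  a.2 i j h

def entry (n : ℕ) (i j : Fin n) : strictUpper n →ₗ[ℝ] ℝ :=
  Matrix.entryLinearMap ℝ ℝ i j ∘ₗ (strictUpper n).toSubmodule.subtype

@[simp]
theorem entry_apply {n : ℕ} (i j : Fin n) (a : strictUpper n) :
    entry n i j a = (a : Matrix (Fin n) (Fin n) ℝ) i j :=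
  rfl

theorem ext_three {a b : strictUpper 3}
    (h01 : entry 3 0 1 a = entry 3 0 1 b) (h02 : entry 3 0 2 a = entry 3 0 2 b)
    (h12 : entry 3 1 2 a = entry 3 1 2 b) : a = b := by
  ext i j
  fin_cases i <;> fin_cases j <;>
    first
    | assumption
    | simp [coe_apply_of_le]

def mkThree (x y z : ℝ) : strictUpper 3 :=
  ⟨!![0, x, z; 0, 0, y; 0, 0, 0], by
    intro i j h
    fin_cases i <;> fin_cases j <;> simp_all⟩

@[simp]
theorem entry_mkThree_zero_one (x y z : ℝ) : entry 3 0 1 (mkThree x y z) = x := rfl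

@[simp]
theorem entry_mkThree_one_two (x y z : ℝ) : entry 3 1 2 (mkThree x y z) = y := rfl

@[simp]
theorem entry_mkThree_zero_two (x y z : ℝ) : entry 3 0 2 (mkThree x y z) = z := rfl

theorem entry_lie {n : ℕ} (i j : Fin n) (a b : strictUpper n) :
    entry n i j ⁅a, b⁆ = ∑ k, (a : Matrix (Fin n) (Fin n) ℝ) i k * (b : Matrix _ _ ℝ) k j
      - ∑ k, (b : Matrix (Fin n) (Fin n) ℝ) i k * (a : Matrix _ _ ℝ) k j := by
  rw [entry_apply, LieSubalgebra.coe_bracket, Ring.lie_def, Matrix.sub_apply,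
    Matrix.mul_apply, Matrix.mul_apply]

@[simp]
theorem entry_lie_zero_one (a b : strictUpper 3) : entry 3 0 1 ⁅a, b⁆ = 0 := by
  rw [entry_lie]
  simp [Fin.sum_univ_three, coe_apply_of_le]

@[simp]
theorem entry_lie_one_two (a b : strictUpper 3) : entry 3 1 2 ⁅a, b⁆ = 0 := by
  rw [entry_lie]
  simp [Fin.sum_univ_three, coe_apply_of_le]

@[simp]
theorem entry_lie_zero_two (a b : strictUpper 3) :
    entry 3 0 2 ⁅a, b⁆ = entry 3 0 1 a * entry 3 1 2 b - entry 3 1 2 a * entry 3 0 1 b := by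
  rw [entry_lie]
  simp [Fin.sum_univ_three, coe_apply_of_le]
  ring

end strictUpper

open strictUpper LinearMap

def heisenbergForm : (ℝ × strictUpper 3) →ₗ[ℝ] (ℝ × strictUpper 3) →ₗ[ℝ] ℝ :=
  wedge (entry 3 0 1 ∘ₗ snd ℝ ℝ _) (entry 3 0 2 ∘ₗ snd ℝ ℝ _) +
    wedge (entry 3 1 2 ∘ₗ snd ℝ ℝ _) (fst ℝ ℝ _)

theorem heisenbergForm_apply (x y : ℝ × strictUpper 3) :
    heisenbergForm x y = entry 3 0 1 x.2 * entry 3 0 2 y.2 - entry 3 0 2 x.2 * entry 3 0 1 y.2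
      + (entry 3 1 2 x.2 * y.1 - x.1 * entry 3 1 2 y.2) :=
  rfl

theorem heisenbergForm_self (x : ℝ × strictUpper 3) : heisenbergForm x x = 0 := by
  rw [heisenbergForm, LinearMap.add_apply, LinearMap.add_apply, wedge_self_apply,
    wedge_self_apply, add_zero]

theorem isClosed2Form_heisenbergForm : IsClosed2Form heisenbergForm := by
  intro x y z
  simp only [heisenbergForm_apply, Prod.lie_fst_eq_zero, Prod.lie_snd, entry_lie_zero_one,
    entry_lie_one_two, entry_lie_zero_two]
  ring

def heisenbergDual (x : ℝ × strictUpper 3) : ℝ × strictUpper 3 :=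
  (entry 3 1 2 x.2, mkThree (-entry 3 0 2 x.2) (-x.1) (entry 3 0 1 x.2))

theorem heisenbergForm_apply_dual (x : ℝ × strictUpper 3) :
    heisenbergForm x (heisenbergDual x) =
      x.1 ^ 2 + entry 3 0 1 x.2 ^ 2 + entry 3 1 2 x.2 ^ 2 + entry 3 0 2 x.2 ^ 2 := by
  simp only [heisenbergDual, heisenbergForm_apply, entry_mkThree_zero_one, entry_mkThree_one_two,
    entry_mkThree_zero_two]
  ring

theorem exists_heisenbergForm_ne_zero {x : ℝ × strictUpper 3} (hx : x ≠ 0) :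
    ∃ y, heisenbergForm x y ≠ 0 := by
  refine ⟨heisenbergDual x, fun h => hx ?_⟩
  rw [heisenbergForm_apply_dual] at h
  refine Prod.ext ?_ (ext_three ?_ ?_ ?_) <;> simp only [Prod.fst_zero, Prod.snd_zero, map_zero] <;>
    nlinarith [sq_nonneg x.1, sq_nonneg (entry 3 0 1 x.2), sq_nonneg (entry 3 1 2 x.2),
      sq_nonneg (entry 3 0 2 x.2)]

/-- The trivial extension `ℝ × 𝔥` of the 3-dimensional Heisenberg Lie algebra `𝔥` (strictly
upper triangular `3 × 3` real matrices) admits a symplectic structure. -/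
theorem heisenberg_extension_symplectic :
    ∃ ω : (ℝ × strictUpper 3) →ₗ[ℝ] (ℝ × strictUpper 3) →ₗ[ℝ] ℝ,
      IsSymplecticForm ω :=
  ⟨heisenbergForm, heisenbergForm_self, isClosed2Form_heisenbergForm,
    fun _ => exists_heisenbergForm_ne_zero⟩
end

section
/- Let m ≥ 2 and let 𝔫_{m,3} be the free 3-step nilpotent real Lie algebra on m generators, i.e. the quotient of the free Lie algebra over ℝ on m generators by the ideal 𝔣^3 (the third term of its lower central series). Then 𝔫_{m,3} is 3-step nilpotent and E_∞^{0,2}(𝔫_{m,3}) ≠ 0: there exist a closed 2-form ω on 𝔫_{m,3}, an element x ∈ (𝔫_{m,3})², and an element y with ω(x,y) ≠ 0. -/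
/-!
Send two generators of the free Lie algebra to `a = E₀₁ + E₂₃` and `b = E₁₂ + E₃₄` in the strictly
upper triangular `5 × 5` matrices, whose lower central series lies in the filtration by
superdiagonals. The corner entry of the bracket, `ω(x, y) = [ψ x, ψ y]₀₄`, is a closed 2-form (the
coboundary of a linear functional), and it vanishes as soon as one argument lies in `𝔣³`, because
`ψ` maps `𝔣³` into the corner, which commutes with everything strictly upper triangular. Hence `ω`
descends to `𝔫_{m,3}`, where `ω([e₀, [e₀, e₁]], e₁) = [[a, [a, b]], b]₀₄ = -2`.
-/

/-- The free 3-step nilpotent real Lie algebra on `m` generators: the quotient of the free Lie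
algebra by the third term of its lower central series. -/
abbrev freeNilpotent3 (m : ℕ) :=
  FreeLieAlgebra ℝ (Fin m) ⧸
    (LieModule.lowerCentralSeries ℝ (FreeLieAlgebra ℝ (Fin m)) (FreeLieAlgebra ℝ (Fin m)) 3 :
      LieIdeal ℝ (FreeLieAlgebra ℝ (Fin m)))

open Function

attribute [local instance 100] LieRing.ofAssociativeRing

namespace LieAlgebra

variable {R L L' : Type*} [CommRing R] [LieRing L] [LieAlgebra R L] [LieRing L']
  [LieAlgebra R L']

structure IsClosedTwoForm (ω : L →ₗ[R] L →ₗ[R] R) : Prop where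
  isAlt : ω.IsAlt
  cyclic_sum_eq_zero : ∀ x y z : L, ω ⁅x, y⁆ z + ω ⁅y, z⁆ x + ω ⁅z, x⁆ y = 0

def bracketForm (f : L →ₗ[R] R) : L →ₗ[R] L →ₗ[R] R :=
  (LieModule.toEnd R L L : L →ₗ[R] Module.End R L).compr₂ f

@[simp]
theorem bracketForm_apply (f : L →ₗ[R] R) (x y : L) : bracketForm f x y = f ⁅x, y⁆ :=
  rfl

theorem isClosedTwoForm_bracketForm (f : L →ₗ[R] R) : IsClosedTwoForm (bracketForm f) where
  isAlt x := by simp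
  cyclic_sum_eq_zero x y z := by
    have jacobi : ⁅⁅x, y⁆, z⁆ + ⁅⁅y, z⁆, x⁆ + ⁅⁅z, x⁆, y⁆ = 0 := by
      rw [← lie_skew ⁅x, y⁆ z, ← lie_skew ⁅y, z⁆ x, ← lie_skew ⁅z, x⁆ y, ← neg_eq_zero,
        ← lie_jacobi x y z]
      abel
    simp only [bracketForm_apply, ← map_add, jacobi, map_zero]

theorem IsClosedTwoForm.compl₁₂ {ω : L →ₗ[R] L →ₗ[R] R} (hω : IsClosedTwoForm ω)
    (ψ : L' →ₗ⁅R⁆ L) : IsClosedTwoForm (ω.compl₁₂ (ψ : L' →ₗ[R] L) ψ) where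
  isAlt x := hω.isAlt (ψ x)
  cyclic_sum_eq_zero x y z := by
    simpa only [LinearMap.compl₁₂_apply, LieHom.coe_toLinearMap, LieHom.map_lie] using
      hω.cyclic_sum_eq_zero (ψ x) (ψ y) (ψ z)

theorem IsClosedTwoForm.of_compl₁₂ {ω : L →ₗ[R] L →ₗ[R] R} {π : L' →ₗ⁅R⁆ L}
    (hπ : Surjective π) (h : IsClosedTwoForm (ω.compl₁₂ (π : L' →ₗ[R] L) π)) :
    IsClosedTwoForm ω where
  isAlt := hπ.forall.2 h.isAlt
  cyclic_sum_eq_zero := hπ.forall₃.2 fun x y z => by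
    simpa only [LinearMap.compl₁₂_apply, LieHom.coe_toLinearMap, LieHom.map_lie] using
      h.cyclic_sum_eq_zero x y z

end LieAlgebra

namespace LieIdeal

variable {R L : Type*} [CommRing R] [LieRing L] [LieAlgebra R L]

def mkQ (I : LieIdeal R L) : L →ₗ⁅R⁆ L ⧸ I :=
  { LieSubmodule.Quotient.mk' I with map_lie' := rfl }

theorem mkQ_surjective (I : LieIdeal R L) : Surjective I.mkQ :=
  LieSubmodule.Quotient.surjective_mk' I

theorem lowerCentralSeries_quotient_eq_bot (k : ℕ) :
    LieModule.lowerCentralSeries R (L ⧸ LieModule.lowerCentralSeries R L L k)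
      (L ⧸ LieModule.lowerCentralSeries R L L k) k = ⊥ := by
  rw [← lowerCentralSeries_map_eq k (mkQ_surjective _), map_eq_bot_iff]
  exact fun _ hx => LieSubmodule.Quotient.mk_eq_zero'.2 hx

end LieIdeal

namespace Matrix

variable (R : Type*) [CommRing R] (n : ℕ)

def upperFiltration (k : ℕ) : Submodule R (Matrix (Fin n) (Fin n) R) where
  carrier := {X | ∀ i j : Fin n, (j : ℕ) < i + k → X i j = 0}
  add_mem' hX hY i j h := by rw [add_apply, hX i j h, hY i j h, add_zero]
  zero_mem' _ _ _ := rfl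
  smul_mem' c X hX i j h := by rw [smul_apply, hX i j h, smul_zero]

variable {R n}

theorem upperFiltration_antitone : Antitone (upperFiltration R n) :=
  fun _ _ hkl _ hX i j h => hX i j (by omega)

theorem single_mem_upperFiltration {k : ℕ} {i j : Fin n} (h : (i : ℕ) + k ≤ j) (c : R) :
    single i j c ∈ upperFiltration R n k := by
  intro i' j' h'
  rw [single_apply, if_neg]
  omega

theorem mul_mem_upperFiltration {p q : ℕ} {X Y : Matrix (Fin n) (Fin n) R}
    (hX : X ∈ upperFiltration R n p) (hY : Y ∈ upperFiltration R n q) :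
    X * Y ∈ upperFiltration R n (p + q) := by
  intro i j h
  rw [mul_apply]
  refine Finset.sum_eq_zero fun l _ => ?_
  by_cases hl : (l : ℕ) < i + p
  · rw [hX i l hl, zero_mul]
  · rw [hY l j (by omega), mul_zero]

theorem lie_mem_upperFiltration {p q : ℕ} {X Y : Matrix (Fin n) (Fin n) R}
    (hX : X ∈ upperFiltration R n p) (hY : Y ∈ upperFiltration R n q) :
    ⁅X, Y⁆ ∈ upperFiltration R n (p + q) := by
  rw [Ring.lie_def]
  exact sub_mem (mul_mem_upperFiltration hX hY) (add_comm q p ▸ mul_mem_upperFiltration hY hX)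

variable (R n)

def strictUpper : LieSubalgebra R (Matrix (Fin n) (Fin n) R) :=
  { upperFiltration R n 1 with
    lie_mem' := fun hX hY =>
      upperFiltration_antitone (by norm_num) (lie_mem_upperFiltration hX hY) }

variable {R n}

theorem coe_mem_upperFiltration_of_mem_lowerCentralSeries {k : ℕ} {X : strictUpper R n}
    (hX : X ∈ LieModule.lowerCentralSeries R (strictUpper R n) (strictUpper R n) k) :
    (X : Matrix (Fin n) (Fin n) R) ∈ upperFiltration R n (k + 1) := by
  induction k generalizing X with
  | zero => exact X.2
  | succ k ih =>
    rw [LieModule.lowerCentralSeries_succ, ← LieSubmodule.mem_toSubmodule,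
      LieSubmodule.lieIdeal_oper_eq_linear_span] at hX
    refine Submodule.span_induction ?_ (zero_mem _) (fun _ _ _ _ => add_mem)
      (fun c _ _ => Submodule.smul_mem _ c) hX
    rintro _ ⟨x, ⟨y, hy⟩, rfl⟩
    rw [LieSubalgebra.coe_bracket, add_comm (k + 1) 1]
    exact lie_mem_upperFiltration x.1.2 (ih hy)

variable (R) in
def evenShift : Matrix (Fin 5) (Fin 5) R := single 0 1 1 + single 2 3 1

variable (R) in
def oddShift : Matrix (Fin 5) (Fin 5) R := single 1 2 1 + single 3 4 1

theorem lie_lie_evenShift_oddShift_apply :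
    ⁅⁅evenShift R, ⁅evenShift R, oddShift R⁆⁆, oddShift R⁆ 0 4 = -2 := by
  simp [evenShift, oddShift, Ring.lie_def, mul_apply, Fin.sum_univ_succ, single_apply]
  norm_num

theorem evenShift_mem_strictUpper : evenShift R ∈ strictUpper R 5 :=
  add_mem (single_mem_upperFiltration (by decide) 1) (single_mem_upperFiltration (by decide) 1)

theorem oddShift_mem_strictUpper : oddShift R ∈ strictUpper R 5 :=
  add_mem (single_mem_upperFiltration (by decide) 1) (single_mem_upperFiltration (by decide) 1)

end Matrix

section CornerForm

open LieAlgebra LieModule Matrix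

variable {R L : Type*} [CommRing R] [LieRing L] [LieAlgebra R L] {k : ℕ}
  (ψ : L →ₗ⁅R⁆ strictUpper R (k + 2))

def cornerForm : L →ₗ[R] L →ₗ[R] R :=
  (bracketForm (entryLinearMap R R 0 (Fin.last (k + 1)) ∘ₗ
    (strictUpper R (k + 2)).toSubmodule.subtype)).compl₁₂ (ψ : L →ₗ[R] strictUpper R (k + 2)) ψ

theorem cornerForm_apply (x y : L) :
    cornerForm ψ x y = (↑⁅ψ x, ψ y⁆ : Matrix (Fin (k + 2)) (Fin (k + 2)) R) 0 (Fin.last (k + 1)) :=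
  rfl

theorem isClosedTwoForm_cornerForm : IsClosedTwoForm (cornerForm ψ) :=
  (isClosedTwoForm_bracketForm _).compl₁₂ ψ

theorem cornerForm_eq_zero_of_mem_lowerCentralSeries {x : L} (hx : x ∈ lowerCentralSeries R L L k)
    (y : L) : cornerForm ψ x y = 0 := by
  have hψx := LieIdeal.map_lowerCentralSeries_le k (f := ψ) (LieIdeal.mem_map hx)
  rw [cornerForm_apply, LieSubalgebra.coe_bracket]
  exact lie_mem_upperFiltration (coe_mem_upperFiltration_of_mem_lowerCentralSeries hψx) (ψ y).2
    0 (Fin.last (k + 1)) (by simp)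

def quotientCornerForm :
    L ⧸ lowerCentralSeries R L L k →ₗ[R] L ⧸ lowerCentralSeries R L L k →ₗ[R] R :=
  (cornerForm ψ).liftQ₂ _ _
    (fun x hx => LinearMap.ext (cornerForm_eq_zero_of_mem_lowerCentralSeries ψ hx))
    (fun y hy => LinearMap.ext fun x => by
      rw [LinearMap.flip_apply, ← (isClosedTwoForm_cornerForm ψ).isAlt.neg,
        cornerForm_eq_zero_of_mem_lowerCentralSeries ψ hy, neg_zero, LinearMap.zero_apply])

theorem quotientCornerForm_mkQ (x y : L) :
    quotientCornerForm ψ (LieIdeal.mkQ _ x) (LieIdeal.mkQ _ y) = cornerForm ψ x y :=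
  rfl

theorem isClosedTwoForm_quotientCornerForm : IsClosedTwoForm (quotientCornerForm ψ) :=
  .of_compl₁₂ (LieIdeal.mkQ_surjective _) (isClosedTwoForm_cornerForm ψ)

end CornerForm

namespace FreeLieAlgebra

open LieAlgebra Matrix

variable (R : Type*) [CommRing R] {X : Type*} [DecidableEq X]

noncomputable def toStrictUpper (i j : X) : FreeLieAlgebra R X →ₗ⁅R⁆ strictUpper R 5 :=
  lift R (update (update 0 i ⟨evenShift R, evenShift_mem_strictUpper⟩) j
    ⟨oddShift R, oddShift_mem_strictUpper⟩)

theorem cornerForm_toStrictUpper {i j : X} (hij : i ≠ j) :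
    cornerForm (toStrictUpper R i j) ⁅of R i, ⁅of R i, of R j⁆⁆ (of R j) = -2 := by
  simp only [cornerForm_apply, LieHom.map_lie, LieSubalgebra.coe_bracket, toStrictUpper,
    lift_of_apply, update_self, update_of_ne hij]
  exact lie_lie_evenShift_oddShift_apply

end FreeLieAlgebra

open LieModule FreeLieAlgebra in
/-- For `m ≥ 2`, the free 3-step nilpotent Lie algebra `𝔫_{m,3}` on `m` generators is 3-step
nilpotent and has `E_∞^{0,2}(𝔫_{m,3}) ≠ 0`: some closed 2-form does not vanish on
`(𝔫_{m,3})² × 𝔫_{m,3}`. -/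
theorem freeNilpotent3_E02_ne_zero (m : ℕ) (hm : 2 ≤ m) :
    (LieModule.lowerCentralSeries ℝ (freeNilpotent3 m) (freeNilpotent3 m) 3 = ⊥ ∧
     LieModule.lowerCentralSeries ℝ (freeNilpotent3 m) (freeNilpotent3 m) 2 ≠ ⊥) ∧
    ∃ ω : (freeNilpotent3 m) →ₗ[ℝ] (freeNilpotent3 m) →ₗ[ℝ] ℝ,
      (∀ x : freeNilpotent3 m, ω x x = 0) ∧
      (∀ x y z : freeNilpotent3 m, ω ⁅x, y⁆ z + ω ⁅y, z⁆ x + ω ⁅z, x⁆ y = 0) ∧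
      ∃ x ∈ LieModule.lowerCentralSeries ℝ (freeNilpotent3 m) (freeNilpotent3 m) 2,
        ∃ y : freeNilpotent3 m, ω x y ≠ 0 := by
  let i : Fin m := ⟨0, by omega⟩
  let j : Fin m := ⟨1, by omega⟩
  let ψ := toStrictUpper ℝ i j
  let e₀ : freeNilpotent3 m := LieIdeal.mkQ _ (of ℝ i)
  let e₁ : freeNilpotent3 m := LieIdeal.mkQ _ (of ℝ j)
  have hω : quotientCornerForm ψ ⁅e₀, ⁅e₀, e₁⁆⁆ e₁ ≠ 0 := by
    rw [← LieHom.map_lie, ← LieHom.map_lie, quotientCornerForm_mkQ,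
      cornerForm_toStrictUpper ℝ (by simp [i, j, Fin.ext_iff])]
    norm_num
  have hmem : ⁅e₀, ⁅e₀, e₁⁆⁆ ∈ lowerCentralSeries ℝ (freeNilpotent3 m) (freeNilpotent3 m) 2 :=
    iterate_toEnd_mem_lowerCentralSeries ℝ _ _ e₀ e₁ 2
  have hclosed := isClosedTwoForm_quotientCornerForm ψ
  refine ⟨⟨LieIdeal.lowerCentralSeries_quotient_eq_bot 3, ?_⟩, quotientCornerForm ψ,
    hclosed.isAlt, hclosed.cyclic_sum_eq_zero, _, hmem, e₁, hω⟩
  intro hbot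
  rw [hbot, LieSubmodule.mem_bot] at hmem
  rw [hmem, map_zero, LinearMap.zero_apply] at hω
  exact hω rfl
end

section
/- Let 𝔫 be the 6-dimensional real nilpotent Lie algebra with basis e₁,…,e₆ and nonzero brackets [e₁,e₂] = e₄, [e₁,e₃] = e₅, [e₁,e₄] = e₆ (all other brackets of basis vectors zero), and let e¹,…,e⁶ be the dual basis. Then the 2-forms ω₁ = e¹∧e⁶ − e²∧e⁴ + e³∧e⁵ and ω₂ = e¹∧e⁶ + e²∧e⁵ + e³∧e⁴ are both symplectic structures on 𝔫, and there is no Lie algebra automorphism A of 𝔫 such that the 2-form (x,y) ↦ ω₁(Ax, Ay) − ω₂(x,y) is exact, i.e. of the shape (x,y) ↦ f([x,y]) for a linear functional f on 𝔫. -/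
/-- The standard basis vector `eᵢ` of `ℝ⁶`. -/
noncomputable def e6 (i : Fin 6) : Fin 6 → ℝ := Pi.single i 1

/-- The 2-form `ω₁ = e¹∧e⁶ − e²∧e⁴ + e³∧e⁵` (0-indexed coordinates). -/
def w1 (x y : Fin 6 → ℝ) : ℝ :=
  (x 0 * y 5 - x 5 * y 0) - (x 1 * y 3 - x 3 * y 1) + (x 2 * y 4 - x 4 * y 2)

/-- The 2-form `ω₂ = e¹∧e⁶ + e²∧e⁵ + e³∧e⁴` (0-indexed coordinates). -/
def w2 (x y : Fin 6 → ℝ) : ℝ :=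
  (x 0 * y 5 - x 5 * y 0) + (x 1 * y 4 - x 4 * y 1) + (x 2 * y 3 - x 3 * y 2)

/-!
`𝔫` is the semidirect product `ℝe₁ ⋉ 𝔞` of a line with the abelian ideal `𝔞 = span(e₂, …, e₆)`,
on which `e₁` acts by the nilpotent derivation `e₂ ↦ e₄ ↦ e₆`, `e₃ ↦ e₅`; such a bracket satisfies
Jacobi because `ad e₁` takes values in `𝔞`. Each of `ω₁`, `ω₂` pairs every `x` with a vector `y`
such that `ω(x, y) = |x|²`, so both are nondegenerate.

An exact form `f([x, y])` vanishes on commuting pairs, so `A^*ω₁ = ω₂` there. Write `a = Ae₁`,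
`b = Ae₂`, `c = Ae₃`, so that `Ae₄ = [a, b]`, `Ae₅ = [a, c]`, `Ae₆ = [a, [a, b]]`. Then
`A^*ω₁ = ω₂` on `(e₁, e₆)` and `(e₃, e₆)`, `[a, Ae₅] = 0`, and `A^*ω₁ = ω₂` on `(e₃, e₅)`
successively force `a₁ ≠ 0`, `c₁ = 0`, `c₂ = 0`, `c₃ = 0`: `Ae₃` lies in the derived algebra
`span(e₄, e₅, e₆)`, which is `ω₁`-isotropic and contains `Ae₄`, so `ω₁(Ae₃, Ae₄) = 0`,
whereas `ω₂(e₃, e₄) = 1`.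
-/

section SemidirectBracket

variable {R M : Type*} [CommRing R] [AddCommGroup M] [Module R M]

/-- With `M = R e ⊕ ker φ` and `φ e = 1`, this is the bracket of the semidirect product
`R ⋉_D ker φ`, the line `R e` acting on the abelian ideal `ker φ` through `D`. -/
def semidirectBracket (φ : M →ₗ[R] R) (D : M →ₗ[R] M) : M →ₗ[R] M →ₗ[R] M :=
  LinearMap.mk₂ R (fun x y => φ x • D y - φ y • D x)
    (fun x x' y => by simp only [map_add, add_smul, smul_add]; abel)
    (fun c x y => by simp only [map_smul, smul_eq_mul, mul_smul, smul_sub, smul_comm c])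
    (fun x y y' => by simp only [map_add, add_smul, smul_add]; abel)
    (fun c x y => by simp only [map_smul, smul_eq_mul, mul_smul, smul_sub, smul_comm c])

variable (φ : M →ₗ[R] R) (D : M →ₗ[R] M)

theorem semidirectBracket_apply (x y : M) :
    semidirectBracket φ D x y = φ x • D y - φ y • D x := rfl

theorem semidirectBracket_self (x : M) : semidirectBracket φ D x x = 0 :=
  sub_self _

theorem semidirectBracket_leibniz (hφD : φ.comp D = 0) (x y z : M) :
    semidirectBracket φ D x (semidirectBracket φ D y z) =
      semidirectBracket φ D (semidirectBracket φ D x y) z +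
        semidirectBracket φ D y (semidirectBracket φ D x z) := by
  have hφ (v : M) : φ (D v) = 0 := LinearMap.congr_fun hφD v
  simp only [semidirectBracket_apply, map_sub, map_smul, LinearMap.sub_apply,
    LinearMap.smul_apply, hφ]
  module

end SemidirectBracket

noncomputable section

def nDerivation : (Fin 6 → ℝ) →ₗ[ℝ] (Fin 6 → ℝ) :=
  LinearMap.pi ![0, 0, 0, LinearMap.proj 1, LinearMap.proj 2, LinearMap.proj 3]

def nBracket : (Fin 6 → ℝ) →ₗ[ℝ] (Fin 6 → ℝ) →ₗ[ℝ] (Fin 6 → ℝ) :=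
  semidirectBracket (LinearMap.proj 0) nDerivation

end

theorem proj_zero_comp_nDerivation : (LinearMap.proj 0).comp nDerivation = 0 := by
  ext; simp [nDerivation]

theorem nBracket_apply (x y : Fin 6 → ℝ) :
    nBracket x y = ![0, 0, 0, x 0 * y 1 - y 0 * x 1, x 0 * y 2 - y 0 * x 2,
      x 0 * y 3 - y 0 * x 3] := by
  ext k
  fin_cases k <;> simp [nBracket, semidirectBracket_apply, nDerivation]

theorem nBracket_structure_constants :
    nBracket (e6 0) (e6 1) = e6 3 ∧ nBracket (e6 0) (e6 2) = e6 4 ∧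
      nBracket (e6 0) (e6 3) = e6 5 := by
  refine ⟨?_, ?_, ?_⟩ <;> ext k <;> fin_cases k <;> simp [nBracket_apply, e6]

theorem nBracket_e6_e6_eq_zero (i j : Fin 6)
    (hij : ¬((i = 0 ∧ j = 1) ∨ (i = 1 ∧ j = 0) ∨ (i = 0 ∧ j = 2) ∨ (i = 2 ∧ j = 0) ∨
      (i = 0 ∧ j = 3) ∨ (i = 3 ∧ j = 0))) : nBracket (e6 i) (e6 j) = 0 := by
  rw [nBracket_apply]
  fin_cases i <;> fin_cases j <;> simp_all [e6]

theorem w1_closed (x y z : Fin 6 → ℝ) :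
    w1 (nBracket x y) z + w1 (nBracket y z) x + w1 (nBracket z x) y = 0 := by
  simp only [w1, nBracket_apply, Matrix.cons_val_zero, Matrix.cons_val_one, Matrix.cons_val]
  ring

theorem w2_closed (x y z : Fin 6 → ℝ) :
    w2 (nBracket x y) z + w2 (nBracket y z) x + w2 (nBracket z x) y = 0 := by
  simp only [w2, nBracket_apply, Matrix.cons_val_zero, Matrix.cons_val_one, Matrix.cons_val]
  ring

theorem exists_ne_zero_of_sum_sq {ι : Type*} [Fintype ι] (ω : (ι → ℝ) → (ι → ℝ) → ℝ)
    (h : ∀ x, ∃ y, ω x y = ∑ i, x i ^ 2) (x : ι → ℝ) (hx : x ≠ 0) : ∃ y, ω x y ≠ 0 := by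
  obtain ⟨y, hy⟩ := h x
  refine ⟨y, fun hzero => hx ?_⟩
  have hsq : (fun i => x i ^ 2) = 0 :=
    (Fintype.sum_eq_zero_iff_of_nonneg fun i => sq_nonneg (x i)).mp (hy ▸ hzero)
  exact funext fun i => pow_eq_zero_iff two_ne_zero |>.mp (congrFun hsq i)

theorem w1_nondegenerate (x : Fin 6 → ℝ) (hx : x ≠ 0) : ∃ y, w1 x y ≠ 0 :=
  exists_ne_zero_of_sum_sq w1 (fun x => ⟨![-x 5, x 3, -x 4, -x 1, x 2, x 0], by
    simp [w1, Fin.sum_univ_succ]; ring⟩) x hx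

theorem w2_nondegenerate (x : Fin 6 → ℝ) (hx : x ≠ 0) : ∃ y, w2 x y ≠ 0 :=
  exists_ne_zero_of_sum_sq w2 (fun x => ⟨![-x 5, -x 4, -x 3, x 2, x 1, x 0], by
    simp [w2, Fin.sum_univ_succ]; ring⟩) x hx

theorem not_exists_aut_w1_comp_sub_w2_exact :
    ¬ ∃ A : (Fin 6 → ℝ) ≃ₗ[ℝ] (Fin 6 → ℝ),
        (∀ x y : Fin 6 → ℝ, A (nBracket x y) = nBracket (A x) (A y)) ∧
        ∃ f : (Fin 6 → ℝ) →ₗ[ℝ] ℝ,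
          ∀ x y : Fin 6 → ℝ, w1 (A x) (A y) - w2 x y = f (nBracket x y) := by
  rintro ⟨A, hA, f, hf⟩
  have hcomm (i j : Fin 6) (hij : nBracket (e6 i) (e6 j) = 0) :
      w1 (A (e6 i)) (A (e6 j)) = w2 (e6 i) (e6 j) := by
    simpa [hij, sub_eq_zero] using hf (e6 i) (e6 j)
  have h05 : w1 (A (e6 0)) (A (e6 5)) = 1 := by
    rw [hcomm 0 5 (nBracket_e6_e6_eq_zero 0 5 (by decide))]; simp [w2, e6]
  have h25 : w1 (A (e6 2)) (A (e6 5)) = 0 := by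
    rw [hcomm 2 5 (nBracket_e6_e6_eq_zero 2 5 (by decide))]; simp [w2, e6]
  have h24 : w1 (A (e6 2)) (A (e6 4)) = 0 := by
    rw [hcomm 2 4 (nBracket_e6_e6_eq_zero 2 4 (by decide))]; simp [w2, e6]
  have h23 : w1 (A (e6 2)) (A (e6 3)) = 1 := by
    rw [hcomm 2 3 (nBracket_e6_e6_eq_zero 2 3 (by decide))]; simp [w2, e6]
  have h04 : nBracket (A (e6 0)) (A (e6 4)) 5 = 0 := by
    rw [← hA, nBracket_e6_e6_eq_zero 0 4 (by decide), map_zero, Pi.zero_apply]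
  obtain ⟨h3, h4, h5⟩ := nBracket_structure_constants
  rw [← h5, hA, ← h3, hA] at h05 h25
  rw [← h4, hA] at h24 h04
  rw [← h3, hA] at h23
  generalize A (e6 0) = a, A (e6 1) = b, A (e6 2) = c at *
  simp only [w1, nBracket_apply, Matrix.cons_val_zero, Matrix.cons_val_one, Matrix.cons_val,
    mul_zero, zero_mul, sub_self, sub_zero, add_zero] at h05 h25 h24 h23 h04
  have ha : a 0 ≠ 0 := left_ne_zero_of_mul_eq_one h05
  have ht : a 0 * b 1 - b 0 * a 1 ≠ 0 := fun h => by simp [h] at h05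
  have hc0 : c 0 = 0 := by simpa [ha, ht] using h25
  have hc1 : c 1 = 0 := by simpa [ha, hc0] using h04
  have hc2 : c 2 = 0 := by simpa [hc0, hc1, ha] using h24
  simp [hc0, hc1, hc2] at h23

/-- On the 6-dimensional nilpotent Lie algebra with brackets `[e₁,e₂] = e₄`, `[e₁,e₃] = e₅`,
`[e₁,e₄] = e₆`, the forms `ω₁ = e¹∧e⁶ − e²∧e⁴ + e³∧e⁵` and `ω₂ = e¹∧e⁶ + e²∧e⁵ + e³∧e⁴` are
symplectic, but no automorphism pulls `ω₁` back to a form cohomologous to `ω₂`: the classes of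
`ω₁` and `ω₂` in `H²(𝔫)` lie in different `Aut(𝔫)`-orbits. -/
theorem symplectic_forms_in_different_aut_orbits :
    ∃ B : (Fin 6 → ℝ) →ₗ[ℝ] (Fin 6 → ℝ) →ₗ[ℝ] (Fin 6 → ℝ),
      -- B is a Lie bracket: alternating and satisfying the Jacobi (Leibniz) identity
      (∀ x : Fin 6 → ℝ, B x x = 0) ∧
      (∀ x y z : Fin 6 → ℝ, B x (B y z) = B (B x y) z + B y (B x z)) ∧
      -- structure constants: [e₁,e₂] = e₄, [e₁,e₃] = e₅, [e₁,e₄] = e₆, all others zero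
      (B (e6 0) (e6 1) = e6 3 ∧ B (e6 0) (e6 2) = e6 4 ∧ B (e6 0) (e6 3) = e6 5) ∧
      (∀ i j : Fin 6,
        ¬((i = 0 ∧ j = 1) ∨ (i = 1 ∧ j = 0) ∨ (i = 0 ∧ j = 2) ∨ (i = 2 ∧ j = 0) ∨
          (i = 0 ∧ j = 3) ∨ (i = 3 ∧ j = 0)) → B (e6 i) (e6 j) = 0) ∧
      -- ω₁ and ω₂ are symplectic structures
      ((∀ x y z : Fin 6 → ℝ, w1 (B x y) z + w1 (B y z) x + w1 (B z x) y = 0) ∧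
        (∀ x : Fin 6 → ℝ, x ≠ 0 → ∃ y : Fin 6 → ℝ, w1 x y ≠ 0)) ∧
      ((∀ x y z : Fin 6 → ℝ, w2 (B x y) z + w2 (B y z) x + w2 (B z x) y = 0) ∧
        (∀ x : Fin 6 → ℝ, x ≠ 0 → ∃ y : Fin 6 → ℝ, w2 x y ≠ 0)) ∧
      -- but the pullback of ω₁ by any automorphism is never cohomologous to ω₂
      ¬ ∃ A : (Fin 6 → ℝ) ≃ₗ[ℝ] (Fin 6 → ℝ),
          (∀ x y : Fin 6 → ℝ, A (B x y) = B (A x) (A y)) ∧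
          ∃ f : (Fin 6 → ℝ) →ₗ[ℝ] ℝ,
            ∀ x y : Fin 6 → ℝ, w1 (A x) (A y) - w2 x y = f (B x y) :=
  ⟨nBracket, semidirectBracket_self _ _,
    semidirectBracket_leibniz _ _ proj_zero_comp_nDerivation, nBracket_structure_constants,
    nBracket_e6_e6_eq_zero, ⟨w1_closed, w1_nondegenerate⟩, ⟨w2_closed, w2_nondegenerate⟩,
    not_exists_aut_w1_comp_sub_w2_exact⟩
end
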